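/- arXiv:1501.05114 — 12 statements merged into one kernel-verified Lean document; each statement's English description precedes it below -/
import Mathlib

section
/- Fix μ0, μ1 > 0 and real numbers d0, d1, and define G(ω) := (ω² − μ0·μ1·(ω² − d0)·(ω² − d1))·sin ω + (μ0·(ω² − d0) + μ1·(ω² − d1))·ω·cos ω. For every ω > 0, the boundary value problem X''(x) = −ω²·X(x) on [0,1], X'(0) = μ0·(−ω² + d0)·X(0), X'(1) = −μ1·(−ω² + d1)·X(1) admits a solution X ∈ C²([0,1],ℝ) that is not identically zero if and only if G(ω) = 0. -/
open Real Set

/-!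
On `[0, 1]` every solution of `X'' = -ω² X` is determined by `(X 0, X' 0)` (uniqueness for the
first-order system `(X, X')' = (X', -ω² X)`, whose right-hand side is linear), hence equals
`A cos (ω x) + B sin (ω x)` with `A = X 0`, `ω B = X' 0`. The left boundary condition fixes `B`
in terms of `A`, and a nontrivial solution forces `A ≠ 0`. Substituting into the right boundary
condition, its residual multiplied by `ω` is exactly `-A · G(ω)`; conversely `A = ω` yields a
solution whenever `G(ω) = 0`.
-/

noncomputable def oscillator (ω A B x : ℝ) : ℝ := A * cos (ω * x) + B * sin (ω * x)

noncomputable def characteristicFunction (μ0 μ1 d0 d1 ω : ℝ) : ℝ :=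
  (ω^2 - μ0*μ1*(ω^2 - d0)*(ω^2 - d1)) * sin ω + (μ0*(ω^2 - d0) + μ1*(ω^2 - d1)) * ω * cos ω

section Oscillator

variable (ω A B : ℝ)

theorem hasDerivAt_oscillator (x : ℝ) :
    HasDerivAt (oscillator ω A B) (oscillator ω (ω * B) (-(ω * A)) x) x := by
  have hωx : HasDerivAt (fun x => ω * x) ω x := by simpa using (hasDerivAt_id x).const_mul ω
  refine ((hωx.cos.const_mul A).add (hωx.sin.const_mul B)).congr_deriv ?_
  simp only [oscillator]
  ring

theorem deriv_oscillator : deriv (oscillator ω A B) = oscillator ω (ω * B) (-(ω * A)) :=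
  funext fun x => (hasDerivAt_oscillator ω A B x).deriv

theorem deriv_deriv_oscillator (x : ℝ) :
    deriv (deriv (oscillator ω A B)) x = -ω^2 * oscillator ω A B x := by
  simp only [deriv_oscillator, oscillator]
  ring

theorem contDiff_oscillator {n : WithTop ℕ∞} : ContDiff ℝ n (oscillator ω A B) := by
  unfold oscillator
  fun_prop

end Oscillator

theorem hasDerivAt_prod_deriv_of_deriv_deriv_eq {y : ℝ → ℝ} (hy : ContDiff ℝ 2 y) {x c : ℝ}
    (hx : deriv (deriv y) x = c * y x) :
    HasDerivAt (fun t => (y t, deriv y t)) (deriv y x, c * y x) x := by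
  have hy' : ContDiff ℝ 1 (deriv y) := hy.iterate_deriv' 1 1
  refine (hy.differentiable (by norm_num) x).hasDerivAt.prodMk ?_
  rw [← hx]
  exact (hy'.differentiable one_ne_zero x).hasDerivAt

theorem eq_and_deriv_eq_of_deriv_deriv_eq_mul {y z : ℝ → ℝ} {a b c : ℝ} (hy : ContDiff ℝ 2 y)
    (hz : ContDiff ℝ 2 z) (hy'' : ∀ x ∈ Icc a b, deriv (deriv y) x = c * y x)
    (hz'' : ∀ x ∈ Icc a b, deriv (deriv z) x = c * z x) (h₀ : y a = z a)
    (h₁ : deriv y a = deriv z a) :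
    ∀ x ∈ Icc a b, y x = z x ∧ deriv y x = deriv z x := by
  let L : ℝ × ℝ →L[ℝ] ℝ × ℝ :=
    (ContinuousLinearMap.snd ℝ ℝ ℝ).prod (c • ContinuousLinearMap.fst ℝ ℝ ℝ)
  have hsol : ∀ w : ℝ → ℝ, ContDiff ℝ 2 w → (∀ x ∈ Icc a b, deriv (deriv w) x = c * w x) →
      ∀ x ∈ Ico a b, HasDerivWithinAt (fun t => (w t, deriv w t)) (L (w x, deriv w x)) (Ici x) x :=
    fun w hw hw'' x hx => (hasDerivAt_prod_deriv_of_deriv_deriv_eq hw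
      (hw'' x (Ico_subset_Icc_self hx))).hasDerivWithinAt
  have hcont : ∀ w : ℝ → ℝ, ContDiff ℝ 2 w → ContinuousOn (fun t => (w t, deriv w t)) (Icc a b) :=
    fun w hw => ((hw.continuous).prodMk (hw.continuous_deriv (by norm_num))).continuousOn
  exact fun x hx => Prod.ext_iff.mp <|
    ODE_solution_unique (v := fun _ => L) (fun _ => L.lipschitz) (hcont y hy) (hsol y hy hy'')
      (hcont z hz) (hsol z hz hz'') (Prod.ext h₀ h₁) hx

theorem mul_right_boundary_residual_oscillator {μ0 μ1 d0 d1 ω A B : ℝ}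
    (hB : ω * B = μ0 * (-ω^2 + d0) * A) :
    ω * (deriv (oscillator ω A B) 1 - -μ1 * (-ω^2 + d1) * oscillator ω A B 1)
      = -A * characteristicFunction μ0 μ1 d0 d1 ω := by
  simp only [deriv_oscillator, oscillator, characteristicFunction, mul_one]
  linear_combination (μ1 * (-ω^2 + d1) * sin ω + ω * cos ω) * hB

theorem negative_eigenvalue_characteristic_equation_general
    (μ0 μ1 d0 d1 : ℝ) (ω : ℝ) (hω : 0 < ω) :
    (∃ X : ℝ → ℝ, ContDiff ℝ 2 X ∧
        (∀ x ∈ Icc (0:ℝ) 1, deriv (deriv X) x = -ω^2 * X x) ∧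
        deriv X 0 = μ0 * (-ω^2 + d0) * X 0 ∧
        deriv X 1 = -μ1 * (-ω^2 + d1) * X 1 ∧
        (∃ x ∈ Icc (0:ℝ) 1, X x ≠ 0)) ↔
      (ω^2 - μ0*μ1*(ω^2 - d0)*(ω^2 - d1)) * Real.sin ω
        + (μ0*(ω^2 - d0) + μ1*(ω^2 - d1)) * ω * Real.cos ω = 0 := by
  change _ ↔ characteristicFunction μ0 μ1 d0 d1 ω = 0
  constructor
  · rintro ⟨X, hX, hX'', hX0, hX1, x₀, hx₀, hXx₀⟩
    set B := deriv X 0 / ω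
    have hB : ω * B = deriv X 0 := mul_div_cancel₀ _ hω.ne'
    have hXeq := eq_and_deriv_eq_of_deriv_deriv_eq_mul hX (contDiff_oscillator ω (X 0) B) hX''
      (fun x _ => deriv_deriv_oscillator ω (X 0) B x) (by simp [oscillator])
      (by simp [deriv_oscillator, oscillator, hB])
    obtain ⟨hX1eq, hX'1eq⟩ := hXeq 1 (right_mem_Icc.mpr zero_le_one)
    have hA : X 0 ≠ 0 := by
      intro hA
      have hB0 : B = 0 := by simpa [hA, hω.ne', hX0] using hB
      exact hXx₀ (by simpa [hA, hB0, oscillator] using (hXeq x₀ hx₀).1)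
    have hres := mul_right_boundary_residual_oscillator (μ1 := μ1) (d1 := d1) (hB.trans hX0)
    rw [← hX1eq, ← hX'1eq, hX1, sub_self, mul_zero] at hres
    simpa [hA] using hres
  · intro hG
    have hres := mul_right_boundary_residual_oscillator (μ1 := μ1) (d1 := d1)
      (mul_comm ω (μ0 * (-ω^2 + d0)))
    rw [hG, mul_zero, mul_eq_zero, sub_eq_zero] at hres
    refine ⟨oscillator ω ω (μ0 * (-ω^2 + d0)), contDiff_oscillator _ _ _,
      fun x _ => deriv_deriv_oscillator _ _ _ x, ?_, hres.resolve_left hω.ne',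
      0, left_mem_Icc.mpr zero_le_one, by simp [oscillator, hω.ne']⟩
    simp only [deriv_oscillator, oscillator, mul_zero, cos_zero, sin_zero]
    ring

/-- For ω > 0, the BVP X'' = -ω²X on [0,1] with
X'(0) = μ0(-ω²+d0)X(0), X'(1) = -μ1(-ω²+d1)X(1) has a nontrivial C² solution
iff G(ω) = 0. -/
theorem negative_eigenvalue_characteristic_equation
    (μ0 μ1 d0 d1 : ℝ) (hμ0 : 0 < μ0) (hμ1 : 0 < μ1) (ω : ℝ) (hω : 0 < ω) :
    (∃ X : ℝ → ℝ, ContDiff ℝ 2 X ∧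
        (∀ x ∈ Icc (0:ℝ) 1, deriv (deriv X) x = -ω^2 * X x) ∧
        deriv X 0 = μ0 * (-ω^2 + d0) * X 0 ∧
        deriv X 1 = -μ1 * (-ω^2 + d1) * X 1 ∧
        (∃ x ∈ Icc (0:ℝ) 1, X x ≠ 0)) ↔
      (ω^2 - μ0*μ1*(ω^2 - d0)*(ω^2 - d1)) * Real.sin ω
        + (μ0*(ω^2 - d0) + μ1*(ω^2 - d1)) * ω * Real.cos ω = 0 :=
  negative_eigenvalue_characteristic_equation_general μ0 μ1 d0 d1 ω hω
end

section
/- Fix μ0, μ1 > 0 and real numbers d0, d1, and let ω > 0 satisfy G(ω) = 0, where G(ω) := (ω² − μ0·μ1·(ω² − d0)·(ω² − d1))·sin ω + (μ0·(ω² − d0) + μ1·(ω² − d1))·ω·cos ω. Then the function X_ω(x) := ω·cos(ωx) + μ0·(d0 − ω²)·sin(ωx) is a not-identically-zero solution of the problem X'' = −ω²·X on [0,1], X'(0) = μ0·(−ω² + d0)·X(0), X'(1) = −μ1·(−ω² + d1)·X(1); moreover, every C² solution of this problem is a real scalar multiple of X_ω, i.e. the eigenspace associated with the eigenvalue −ω²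 is one-dimensional. -/
/-!
`X_ω` solves `X'' = -ω² X` with the boundary condition at `0`, and `G(ω) = 0` is exactly its boundary
condition at `1`. For uniqueness, a solution `X` and `(X 0 / ω) X_ω` have the same value and slope
at `0`, so their difference `Y` has energy `Y'² + ω² Y²` vanishing at `0`; the energy is constant
along the equation, hence `Y = 0` on `[0, 1]`.
-/

open Real Set

section Sinusoid

noncomputable def sinusoid (ω a b : ℝ) (x : ℝ) : ℝ := a * cos (ω * x) + b * sin (ω * x)

variable {ω a b : ℝ}

@[simp]
theorem sinusoid_zero : sinusoid ω a b 0 = a := by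
  simp [sinusoid]

theorem hasDerivAt_sinusoid (x : ℝ) :
    HasDerivAt (sinusoid ω a b) (sinusoid ω (ω * b) (-(ω * a)) x) x := by
  have hlin : HasDerivAt (fun y : ℝ => ω * y) ω x := by
    simpa using (hasDerivAt_id x).const_mul ω
  have h : HasDerivAt (fun y => a * cos (ω * y) + b * sin (ω * y)) _ x :=
    (((hasDerivAt_cos (ω * x)).comp x hlin).const_mul a).add
      (((hasDerivAt_sin (ω * x)).comp x hlin).const_mul b)
  exact h.congr_deriv (by simp only [sinusoid]; ring)

theorem deriv_sinusoid : deriv (sinusoid ω a b) = sinusoid ω (ω * b) (-(ω * a)) :=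
  funext fun x => (hasDerivAt_sinusoid x).deriv

theorem hasDerivAt_deriv_sinusoid (x : ℝ) :
    HasDerivAt (deriv (sinusoid ω a b)) (-ω ^ 2 * sinusoid ω a b x) x := by
  rw [deriv_sinusoid]
  exact (hasDerivAt_sinusoid x).congr_deriv (by simp only [sinusoid]; ring)

theorem deriv_deriv_sinusoid (x : ℝ) :
    deriv (deriv (sinusoid ω a b)) x = -ω ^ 2 * sinusoid ω a b x :=
  (hasDerivAt_deriv_sinusoid x).deriv

theorem contDiff_sinusoid {n : WithTop ℕ∞} : ContDiff ℝ n (sinusoid ω a b) := by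
  unfold sinusoid
  fun_prop

end Sinusoid

section HarmonicOscillator

variable {Y Y' : ℝ → ℝ} {ω a b : ℝ}

theorem harmonic_energy_eq (hY : ∀ x ∈ Icc a b, HasDerivAt Y (Y' x) x)
    (hY' : ∀ x ∈ Icc a b, HasDerivAt Y' (-ω ^ 2 * Y x) x) :
    ∀ x ∈ Icc a b, Y' x ^ 2 + ω ^ 2 * Y x ^ 2 = Y' a ^ 2 + ω ^ 2 * Y a ^ 2 := by
  have hE : ∀ x ∈ Icc a b, HasDerivAt (fun x => Y' x ^ 2 + ω ^ 2 * Y x ^ 2) 0 x := by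
    intro x hx
    have h : HasDerivAt (fun x => Y' x ^ 2 + ω ^ 2 * Y x ^ 2) _ x :=
      ((hY' x hx).pow 2).add (((hY x hx).pow 2).const_mul (ω ^ 2))
    exact h.congr_deriv (by ring)
  exact constant_of_has_deriv_right_zero
    (fun x hx => (hE x hx).continuousAt.continuousWithinAt)
    (fun x hx => (hE x (Ico_subset_Icc_self hx)).hasDerivWithinAt)

theorem eqOn_zero_of_harmonic (hω : ω ≠ 0) (hY : ∀ x ∈ Icc a b, HasDerivAt Y (Y' x) x)
    (hY' : ∀ x ∈ Icc a b, HasDerivAt Y' (-ω ^ 2 * Y x) x) (ha : Y a = 0) (ha' : Y' a = 0) :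
    EqOn Y 0 (Icc a b) := by
  intro x hx
  have hE := harmonic_energy_eq hY hY' x hx
  rw [ha, ha'] at hE
  have hYx : ω ^ 2 * Y x ^ 2 = 0 := by nlinarith [sq_nonneg (Y' x), sq_nonneg (ω * Y x)]
  simpa [hω] using hYx

theorem eqOn_const_mul_sinusoid_of_deriv_zero {X : ℝ → ℝ} {k : ℝ} (hω : ω ≠ 0)
    (hX : ContDiff ℝ 2 X) (hX'' : ∀ x ∈ Icc 0 b, deriv (deriv X) x = -ω ^ 2 * X x)
    (hX0 : deriv X 0 = k * X 0) :
    ∀ x ∈ Icc 0 b, X x = X 0 / ω * sinusoid ω ω k x := by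
  set S := sinusoid ω ω k
  set c := X 0 / ω
  have hY : ∀ x, HasDerivAt (fun x => X x - c * S x) (deriv X x - c * deriv S x) x := fun x =>
    (hX.differentiable two_ne_zero x).hasDerivAt.sub
      ((hasDerivAt_sinusoid x).differentiableAt.hasDerivAt.const_mul c)
  have hY' : ∀ x ∈ Icc 0 b, HasDerivAt (fun x => deriv X x - c * deriv S x)
      (-ω ^ 2 * (X x - c * S x)) x := fun x hx =>
    ((hX.differentiable_deriv_two x).hasDerivAt.sub
      ((hasDerivAt_deriv_sinusoid x).const_mul c)).congr_deriv (by rw [hX'' x hx]; ring)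
  have hY0 : X 0 - c * S 0 = 0 := by simp [S, c, hω]
  have hY'0 : deriv X 0 - c * deriv S 0 = 0 := by
    simp only [S, deriv_sinusoid, sinusoid_zero, hX0, c]
    field_simp
    ring
  exact fun x hx => sub_eq_zero.mp (eqOn_zero_of_harmonic hω (fun x _ => hY x) hY' hY0 hY'0 hx)

end HarmonicOscillator

theorem negative_eigenvalue_eigenspace_one_dimensional_general
    (μ0 μ1 d0 d1 ω : ℝ) (hω : 0 < ω)
    (hG : (ω^2 - μ0*μ1*(ω^2 - d0)*(ω^2 - d1)) * Real.sin ω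
        + (μ0*(ω^2 - d0) + μ1*(ω^2 - d1)) * ω * Real.cos ω = 0)
    (Xω : ℝ → ℝ)
    (hXω : ∀ x, Xω x = ω * Real.cos (ω * x) + μ0 * (d0 - ω^2) * Real.sin (ω * x)) :
    (ContDiff ℝ 2 Xω ∧
      (∀ x ∈ Icc (0:ℝ) 1, deriv (deriv Xω) x = -ω^2 * Xω x) ∧
      deriv Xω 0 = μ0 * (-ω^2 + d0) * Xω 0 ∧
      deriv Xω 1 = -μ1 * (-ω^2 + d1) * Xω 1 ∧
      (∃ x ∈ Icc (0:ℝ) 1, Xω x ≠ 0)) ∧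
    (∀ X : ℝ → ℝ, ContDiff ℝ 2 X →
      (∀ x ∈ Icc (0:ℝ) 1, deriv (deriv X) x = -ω^2 * X x) →
      deriv X 0 = μ0 * (-ω^2 + d0) * X 0 →
      deriv X 1 = -μ1 * (-ω^2 + d1) * X 1 →
      ∃ c : ℝ, ∀ x ∈ Icc (0:ℝ) 1, X x = c * Xω x) := by
  obtain rfl : Xω = sinusoid ω ω (μ0 * (d0 - ω ^ 2)) := funext hXω
  refine ⟨⟨contDiff_sinusoid, fun x _ => deriv_deriv_sinusoid x, ?_, ?_,
    ⟨0, ⟨le_rfl, zero_le_one⟩, by simpa using hω.ne'⟩⟩, ?_⟩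
  · simp only [deriv_sinusoid, sinusoid_zero]
    ring
  · simp only [deriv_sinusoid, sinusoid, mul_one]
    linear_combination -hG
  intro X hX hX'' hX0 _
  exact ⟨X 0 / ω, eqOn_const_mul_sinusoid_of_deriv_zero hω.ne' hX hX'' (by linear_combination hX0)⟩

/-- If ω > 0 satisfies G(ω) = 0 then
X_ω(x) = ω cos(ωx) + μ0(d0-ω²) sin(ωx) is a nontrivial solution of the BVP,
and every C² solution of the BVP is a scalar multiple of X_ω. -/
theorem negative_eigenvalue_eigenspace_one_dimensional
    (μ0 μ1 d0 d1 ω : ℝ) (hμ0 : 0 < μ0) (hμ1 : 0 < μ1) (hω : 0 < ω)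
    (hG : (ω^2 - μ0*μ1*(ω^2 - d0)*(ω^2 - d1)) * Real.sin ω
        + (μ0*(ω^2 - d0) + μ1*(ω^2 - d1)) * ω * Real.cos ω = 0)
    (Xω : ℝ → ℝ)
    (hXω : ∀ x, Xω x = ω * Real.cos (ω * x) + μ0 * (d0 - ω^2) * Real.sin (ω * x)) :
    (ContDiff ℝ 2 Xω ∧
      (∀ x ∈ Icc (0:ℝ) 1, deriv (deriv Xω) x = -ω^2 * Xω x) ∧
      deriv Xω 0 = μ0 * (-ω^2 + d0) * Xω 0 ∧
      deriv Xω 1 = -μ1 * (-ω^2 + d1) * Xω 1 ∧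
      (∃ x ∈ Icc (0:ℝ) 1, Xω x ≠ 0)) ∧
    (∀ X : ℝ → ℝ, ContDiff ℝ 2 X →
      (∀ x ∈ Icc (0:ℝ) 1, deriv (deriv X) x = -ω^2 * X x) →
      deriv X 0 = μ0 * (-ω^2 + d0) * X 0 →
      deriv X 1 = -μ1 * (-ω^2 + d1) * X 1 →
      ∃ c : ℝ, ∀ x ∈ Icc (0:ℝ) 1, X x = c * Xω x) :=
  negative_eigenvalue_eigenspace_one_dimensional_general μ0 μ1 d0 d1 ω hω hG Xω hXω
end

section
/- Fix μ0, μ1 > 0 and real numbers d0, d1, and define G(ω) := (ω² − μ0·μ1·(ω² − d0)·(ω² − d1))·sin ω + (μ0·(ω² − d0) + μ1·(ω² − d1))·ω·cos ω. There exists n₀ ∈ ℕ such that for every natural number k > n₀, the open interval (kπ, (k+1)π) contains exactly one solution ω of the equation G(ω) = 0. In particular, the equation G(ω) = 0 has infinitely many positive solutions and these solutions are unbounded. -/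
/-!
Write `G = D sin + N cos`, where `D` has degree 4 and `N` has degree 3 with leading coefficient
`μ0 + μ1 > 0`. On `(kπ, (k+1)π)` the sine does not vanish and, for large `k`, `N > 0`, so the zeros
of `G` there are those of `cot + D / N`. The cotangent is strictly decreasing on this interval, and
`D / N` is eventually decreasing because `D'N - DN'` has degree 6 and negative leading coefficient;
hence there is at most one zero. There is one because `G(kπ) = (-1)^k N(kπ)` and
`G((k+1)π) = (-1)^(k+1) N((k+1)π)` have opposite signs.
-/

open Real Set Filter

section SinCosCombination

variable {D N : ℝ → ℝ} {a : ℝ}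

lemma sin_ne_zero_of_mem_Ioo (ha : sin a = 0) {x : ℝ} (hx : x ∈ Ioo a (a + π)) : sin x ≠ 0 := by
  have hcos : cos a ≠ 0 := fun h => by simpa [h, ha] using sin_sq_add_cos_sq a
  have hpos : 0 < sin (x - a) := sin_pos_of_pos_of_lt_pi (by linarith [hx.1]) (by linarith [hx.2])
  have hshift : sin x = cos a * sin (x - a) := by
    simpa [ha] using sin_add a (x - a)
  rw [hshift]
  exact mul_ne_zero hcos hpos.ne'

lemma strictAntiOn_cos_div_sin (ha : sin a = 0) :
    StrictAntiOn (fun x => cos x / sin x) (Ioo a (a + π)) := by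
  have hsin : ∀ x ∈ Ioo a (a + π), sin x ≠ 0 := fun x hx => sin_ne_zero_of_mem_Ioo ha hx
  refine strictAntiOn_of_hasDerivWithinAt_neg (convex_Ioo _ _) (f' := fun x => -1 / sin x ^ 2)
    (continuousOn_cos.div continuousOn_sin hsin) (fun x hx => ?_) (fun x hx => ?_) <;>
    rw [interior_Ioo] at hx
  · refine ((hasDerivAt_cos x).div (hasDerivAt_sin x) (hsin x hx)).hasDerivWithinAt.congr_deriv ?_
    rw [← sin_sq_add_cos_sq x]
    ring
  · exact div_neg_of_neg_of_pos neg_one_lt_zero (by have := hsin x hx; positivity)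

lemma exists_mul_sin_add_mul_cos_eq_zero (ha : sin a = 0)
    (hD : ContinuousOn D (Icc a (a + π))) (hN : ContinuousOn N (Icc a (a + π)))
    (hNa : 0 < N a) (hNb : 0 < N (a + π)) :
    ∃ x ∈ Ioo a (a + π), D x * sin x + N x * cos x = 0 := by
  have hcos : cos a ^ 2 = 1 := by rw [cos_sq', ha]; norm_num
  -- multiplying by `cos a = ±1` normalises the signs at the two endpoints
  set f := fun x => cos a * (D x * sin x + N x * cos x)
  have hfa : f a = N a := by simp only [f, ha]; linear_combination N a * hcos
  have hfb : f (a + π) = -N (a + π) := by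
    simp only [f, sin_add_pi, cos_add_pi, ha]; linear_combination -N (a + π) * hcos
  obtain ⟨x, hx, hfx⟩ := intermediate_value_Ioo' (by linarith [pi_pos])
    (continuousOn_const.mul ((hD.mul continuousOn_sin).add (hN.mul continuousOn_cos)))
    (show (0 : ℝ) ∈ Ioo (f (a + π)) (f a) by rw [hfa, hfb]; constructor <;> linarith)
  refine ⟨x, hx, (mul_eq_zero.mp hfx).resolve_left fun h => ?_⟩
  simp [h] at hcos

theorem existsUnique_mul_sin_add_mul_cos_eq_zero (ha : sin a = 0)
    (hD : ContinuousOn D (Icc a (a + π))) (hN : ContinuousOn N (Icc a (a + π)))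
    (hNpos : ∀ x ∈ Icc a (a + π), 0 < N x)
    (hDN : AntitoneOn (fun x => D x / N x) (Ioo a (a + π))) :
    ∃! x, x ∈ Ioo a (a + π) ∧ D x * sin x + N x * cos x = 0 := by
  have hπ := pi_pos
  obtain ⟨x, hx, hx0⟩ := exists_mul_sin_add_mul_cos_eq_zero ha hD hN
    (hNpos a ⟨le_rfl, by linarith⟩) (hNpos _ ⟨by linarith, le_rfl⟩)
  have hψ := (strictAntiOn_cos_div_sin ha).add_antitone hDN
  have hψ0 : ∀ y ∈ Ioo a (a + π), D y * sin y + N y * cos y = 0 →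
      cos y / sin y + D y / N y = 0 := fun y hy hy0 => by
    have hs := sin_ne_zero_of_mem_Ioo ha hy
    have hn := (hNpos y (Ioo_subset_Icc_self hy)).ne'
    field_simp
    linear_combination hy0
  exact ⟨x, ⟨hx, hx0⟩, fun y ⟨hy, hy0⟩ =>
    hψ.injOn hy hx ((hψ0 y hy hy0).trans (hψ0 x hx hx0).symm)⟩

end SinCosCombination

lemma antitoneOn_div_of_deriv_mul_sub_mul_deriv_nonpos {f g f' g' : ℝ → ℝ} {s : Set ℝ}
    (hs : Convex ℝ s) (hf : ∀ x ∈ s, HasDerivAt f (f' x) x) (hg : ∀ x ∈ s, HasDerivAt g (g' x) x)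
    (hg0 : ∀ x ∈ s, g x ≠ 0) (hW : ∀ x ∈ s, f' x * g x - f x * g' x ≤ 0) :
    AntitoneOn (fun x => f x / g x) s := by
  have hdiv : ∀ x ∈ s, HasDerivAt (fun x => f x / g x) ((f' x * g x - f x * g' x) / g x ^ 2) x :=
    fun x hx => (hf x hx).div (hg x hx) (hg0 x hx)
  exact antitoneOn_of_hasDerivWithinAt_nonpos hs
    (continuousOn_of_forall_continuousAt fun x hx => (hdiv x hx).continuousAt)
    (fun x hx => (hdiv x (interior_subset hx)).hasDerivWithinAt)
    (fun x hx => div_nonpos_of_nonpos_of_nonneg (hW x (interior_subset hx)) (sq_nonneg _))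

lemma eventually_pos_of_eq_pow_mul_inv {f w : ℝ → ℝ} (n : ℕ) (hw : ContinuousAt w 0)
    (hw0 : 0 < w 0) (hf : ∀ x ≠ 0, f x = x ^ n * w x⁻¹) : ∀ᶠ x in atTop, 0 < f x := by
  filter_upwards [(hw.tendsto.comp tendsto_inv_atTop_zero).eventually_const_lt hw0,
    eventually_gt_atTop 0] with x hwx hx
  rw [hf x hx.ne']
  exact mul_pos (pow_pos hx n) hwx

section CharacteristicFunction

variable (μ0 μ1 d0 d1 : ℝ)

def sinCoeff (ω : ℝ) : ℝ := ω ^ 2 - μ0 * μ1 * (ω ^ 2 - d0) * (ω ^ 2 - d1)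

def cosCoeff (ω : ℝ) : ℝ := (μ0 * (ω ^ 2 - d0) + μ1 * (ω ^ 2 - d1)) * ω

def sinCoeffDeriv (ω : ℝ) : ℝ := 2 * ω - 2 * μ0 * μ1 * ω * (2 * ω ^ 2 - d0 - d1)

def cosCoeffDeriv (ω : ℝ) : ℝ := 3 * (μ0 + μ1) * ω ^ 2 - (μ0 * d0 + μ1 * d1)

lemma hasDerivAt_sinCoeff (x : ℝ) :
    HasDerivAt (sinCoeff μ0 μ1 d0 d1) (sinCoeffDeriv μ0 μ1 d0 d1 x) x := by
  have hsq : HasDerivAt (fun y => y ^ 2) (2 * x) x := by simpa using hasDerivAt_pow 2 x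
  exact (hsq.sub (((hsq.sub_const d0).const_mul (μ0 * μ1)).mul (hsq.sub_const d1))).congr_deriv
    (by simp only [sinCoeffDeriv]; ring)

lemma hasDerivAt_cosCoeff (x : ℝ) :
    HasDerivAt (cosCoeff μ0 μ1 d0 d1) (cosCoeffDeriv μ0 μ1 d0 d1 x) x := by
  have hsq : HasDerivAt (fun y => y ^ 2) (2 * x) x := by simpa using hasDerivAt_pow 2 x
  exact ((((hsq.sub_const d0).const_mul μ0).add ((hsq.sub_const d1).const_mul μ1)).mul
    (hasDerivAt_id x)).congr_deriv (by simp only [cosCoeffDeriv, id, Pi.add_apply]; ring)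

lemma continuous_sinCoeff : Continuous (sinCoeff μ0 μ1 d0 d1) := by
  unfold sinCoeff; fun_prop

lemma continuous_cosCoeff : Continuous (cosCoeff μ0 μ1 d0 d1) := by
  unfold cosCoeff; fun_prop

variable {μ0 μ1}

lemma eventually_cosCoeff_pos (hμ0 : 0 < μ0) (hμ1 : 0 < μ1) :
    ∀ᶠ x in atTop, 0 < cosCoeff μ0 μ1 d0 d1 x :=
  eventually_pos_of_eq_pow_mul_inv 3 (w := fun u => μ0 * (1 - d0 * u ^ 2) + μ1 * (1 - d1 * u ^ 2))
    (by fun_prop) (by simpa using add_pos hμ0 hμ1) fun x hx => by simp only [cosCoeff]; field_simp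

lemma eventually_sinCoeffDeriv_mul_sub_mul_cosCoeffDeriv_neg (hμ0 : 0 < μ0) (hμ1 : 0 < μ1) :
    ∀ᶠ x in atTop, sinCoeffDeriv μ0 μ1 d0 d1 x * cosCoeff μ0 μ1 d0 d1 x
      - sinCoeff μ0 μ1 d0 d1 x * cosCoeffDeriv μ0 μ1 d0 d1 x < 0 := by
  -- `D'N - DN'` has degree 6 and leading coefficient `-μ0 μ1 (μ0 + μ1)`
  set m := μ0 * μ1
  set s := μ0 + μ1
  set e := μ0 * d0 + μ1 * d1
  set b := 1 + m * (d0 + d1)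
  set c := m * d0 * d1
  have h := eventually_pos_of_eq_pow_mul_inv 6
    (f := fun x => -(sinCoeffDeriv μ0 μ1 d0 d1 x * cosCoeff μ0 μ1 d0 d1 x
      - sinCoeff μ0 μ1 d0 d1 x * cosCoeffDeriv μ0 μ1 d0 d1 x))
    (w := fun u => m * s - (3 * m * e - b * s) * u ^ 2 - (3 * c * s - b * e) * u ^ 4 + c * e * u ^ 6)
    (by fun_prop) (by simpa using mul_pos (mul_pos hμ0 hμ1) (add_pos hμ0 hμ1)) fun x hx => by
      simp only [sinCoeff, cosCoeff, sinCoeffDeriv, cosCoeffDeriv, m, s, e, b, c]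
      field_simp; ring
  filter_upwards [h] with x hx
  linarith

lemma exists_cosCoeff_pos_antitoneOn_sinCoeff_div (hμ0 : 0 < μ0) (hμ1 : 0 < μ1) :
    ∃ M, (∀ x ∈ Ici M, 0 < cosCoeff μ0 μ1 d0 d1 x) ∧
      AntitoneOn (fun x => sinCoeff μ0 μ1 d0 d1 x / cosCoeff μ0 μ1 d0 d1 x) (Ici M) := by
  obtain ⟨M, hM⟩ := ((eventually_cosCoeff_pos d0 d1 hμ0 hμ1).and
    (eventually_sinCoeffDeriv_mul_sub_mul_cosCoeffDeriv_neg d0 d1 hμ0 hμ1)).exists_forall_of_atTop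
  exact ⟨M, fun x hx => (hM x hx).1, antitoneOn_div_of_deriv_mul_sub_mul_deriv_nonpos (convex_Ici M)
    (fun x _ => hasDerivAt_sinCoeff μ0 μ1 d0 d1 x) (fun x _ => hasDerivAt_cosCoeff μ0 μ1 d0 d1 x)
    (fun x hx => (hM x hx).1.ne') (fun x hx => (hM x hx).2.le)⟩

end CharacteristicFunction

/-- There is n₀ such that for every k > n₀ the interval (kπ,(k+1)π)
contains exactly one zero of G; moreover the set of positive zeros of G is
infinite and unbounded above. -/
theorem characteristic_equation_infinitely_many_zeros
    (μ0 μ1 d0 d1 : ℝ) (hμ0 : 0 < μ0) (hμ1 : 0 < μ1)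
    (G : ℝ → ℝ)
    (hG : ∀ ω, G ω = (ω^2 - μ0*μ1*(ω^2 - d0)*(ω^2 - d1)) * Real.sin ω
        + (μ0*(ω^2 - d0) + μ1*(ω^2 - d1)) * ω * Real.cos ω) :
    (∃ n₀ : ℕ, ∀ k : ℕ, n₀ < k →
      ∃! ω : ℝ, ω ∈ Ioo ((k:ℝ)*π) (((k:ℝ)+1)*π) ∧ G ω = 0) ∧
    {ω : ℝ | 0 < ω ∧ G ω = 0}.Infinite ∧
    ¬ BddAbove {ω : ℝ | 0 < ω ∧ G ω = 0} := by
  have hGeq : G = fun ω => sinCoeff μ0 μ1 d0 d1 ω * sin ω + cosCoeff μ0 μ1 d0 d1 ω * cos ω :=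
    funext hG
  obtain ⟨M, hpos, hanti⟩ := exists_cosCoeff_pos_antitoneOn_sinCoeff_div d0 d1 hμ0 hμ1
  have hkπ : Tendsto (fun k : ℕ => (k : ℝ) * π) atTop atTop :=
    tendsto_natCast_atTop_atTop.atTop_mul_const pi_pos
  have hzeros : ∀ᶠ k : ℕ in atTop, ∃! ω : ℝ, ω ∈ Ioo ((k:ℝ)*π) (((k:ℝ)+1)*π) ∧ G ω = 0 := by
    filter_upwards [hkπ.eventually_ge_atTop M] with k hMk
    rw [hGeq, add_one_mul]
    exact existsUnique_mul_sin_add_mul_cos_eq_zero (sin_nat_mul_pi k)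
      (continuous_sinCoeff ..).continuousOn (continuous_cosCoeff ..).continuousOn
      (fun x hx => hpos x (hMk.trans hx.1)) (hanti.mono fun x hx => hMk.trans hx.1.le)
  have hunbdd : ¬ BddAbove {ω : ℝ | 0 < ω ∧ G ω = 0} := by
    refine not_bddAbove_iff.mpr fun c => ?_
    obtain ⟨k, ⟨ω, ⟨hω, hω0⟩, -⟩, hk⟩ :=
      (hzeros.and (hkπ.eventually_ge_atTop (max c 0))).exists
    exact ⟨ω, ⟨(le_of_max_le_right hk).trans_lt hω.1, hω0⟩, (le_of_max_le_left hk).trans_lt hω.1⟩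
  obtain ⟨n₀, hn₀⟩ := eventually_atTop.mp hzeros
  exact ⟨⟨n₀, fun k hk => hn₀ k hk.le⟩, fun h => hunbdd h.bddAbove, hunbdd⟩
end

section
/- Fix μ0, μ1 > 0 and real numbers d0, d1, define G(ω) := (ω² − μ0·μ1·(ω² − d0)·(ω² − d1))·sin ω + (μ0·(ω² − d0) + μ1·(ω² − d1))·ω·cos ω, and for each sufficiently large k ∈ ℕ let ω_k denote the unique solution of G(ω) = 0 in the interval (kπ, (k+1)π). Then ω_k = kπ + (1/μ0 + 1/μ1)/(kπ) + O(k⁻²); that is, there exist C > 0 and K ∈ ℕ such that for all k ≥ K, |ω_k − kπ − (1/μ0 + 1/μ1)/(kπ)| ≤ C/k². -/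
/-!
Write `G ω = a ω * sin ω + b ω * cos ω`, where `a ω = -μ0 μ1 ω⁴ + O(ω²)` and
`b ω = μ0 μ1 c ω³ + O(ω)` with `c = 1/μ0 + 1/μ1`. For `ω = kπ + t`,
`(-1)^k G ω = a ω sin t + b ω cos t = -μ0 μ1 ω³ (ω sin t - c cos t) + O(ω² |t| + ω)`
and `ω sin t - c cos t = ω t - c + O(ω |t|³ + t²)`. At `t = c/(kπ) ± 1/k²` the quantity
`ω t - c` equals `± π/k + O(k⁻²)`, so the leading term, of size `ω³/k`, beats all errors, which
are `O(ω³/k²)`. Hence `G` changes sign between `kπ + c/(kπ) - 1/k²` and `kπ + c/(kπ) + 1/k²`,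
and by uniqueness `ω_k` lies between them.
-/

open Real Set Filter

lemma abs_mul_sin_sub_mul_cos_sub_le (w c t : ℝ) :
    |w * sin t - c * cos t - (w * t - c)| ≤ |w| * |t| ^ 3 + |c| * t ^ 2 := by
  have hsin : |t - sin t| ≤ |t| ^ 3 :=
    (abs_sub_sin_le t).trans (by linarith [pow_nonneg (abs_nonneg t) 3])
  have hcos : |1 - cos t| ≤ t ^ 2 := by
    rw [abs_of_nonneg (sub_nonneg.2 (cos_le_one t))]
    linarith [one_sub_sq_div_two_le_cos (x := t), sq_nonneg t]
  calc |w * sin t - c * cos t - (w * t - c)| = |c * (1 - cos t) - w * (t - sin t)| := by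
        ring_nf
    _ ≤ |c| * |1 - cos t| + |w| * |t - sin t| := by
      simpa only [abs_mul] using abs_sub (c * (1 - cos t)) (w * (t - sin t))
    _ ≤ |c| * t ^ 2 + |w| * |t| ^ 3 := by gcongr
    _ = _ := add_comm _ _

lemma abs_div_add_div_sq_mul_le {k c ε : ℝ} (hk : 1 ≤ k) (hε : |ε| ≤ 1) :
    |c / (k * π) + ε / k ^ 2| * k ≤ |c| + 1 := by
  have hk0 : 0 < k := by linarith
  calc |c / (k * π) + ε / k ^ 2| * k ≤ (|c| / (k * π) + 1 / k ^ 2) * k := by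
        gcongr
        refine (abs_add_le _ _).trans (add_le_add ?_ ?_)
        · rw [abs_div, abs_of_pos (by positivity : 0 < k * π)]
        · rw [abs_div, abs_of_pos (by positivity : 0 < k ^ 2)]; gcongr
    _ = |c| / π + 1 / k := by field_simp
    _ ≤ |c| + 1 := by
      gcongr
      · exact div_le_self (abs_nonneg c) (by linarith [pi_gt_three])
      · exact div_le_one_of_le₀ hk hk0.le

lemma abs_mul_sq_add_le (α β : ℝ) {w : ℝ} (hw : 1 ≤ w) :
    |α * w ^ 2 + β| ≤ (|α| + |β|) * w ^ 2 := by
  have hw2 : 1 ≤ w ^ 2 := one_le_pow₀ hw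
  calc |α * w ^ 2 + β| ≤ |α| * w ^ 2 + |β| :=
        (abs_add_le _ _).trans_eq (by rw [abs_mul, abs_of_nonneg (sq_nonneg w)])
    _ ≤ |α| * w ^ 2 + |β| * w ^ 2 := by gcongr; exact le_mul_of_one_le_right (abs_nonneg β) hw2
    _ = (|α| + |β|) * w ^ 2 := by ring

lemma le_mul_pi_add {k t : ℝ} (hk : 0 ≤ k) (ht : |t| ≤ k) : k ≤ k * π + t := by
  nlinarith [neg_abs_le t, pi_gt_three]

lemma sub_le_sq_mul_mul_sin_sub_mul_cos {c k ε t : ℝ} (hk : |c| + 1 ≤ k) (hε : |ε| = 1)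
    (ht : t = c / (k * π) + ε / k ^ 2) :
    π * k - (|c| + 1) ^ 2 * (1 + |c| + (π + (|c| + 1)) * (|c| + 1))
      ≤ k ^ 2 * (ε * ((k * π + t) * sin t - c * cos t)) := by
  set C := |c| + 1
  set w := k * π + t
  have hk1 : 1 ≤ k := (le_add_of_nonneg_left (abs_nonneg c)).trans hk
  have htk : |t| * k ≤ C := ht ▸ abs_div_add_div_sq_mul_le hk1 hε.le
  have ht1 : |t| ≤ C := by nlinarith [abs_nonneg t]
  have hw : 0 < w := by linarith [le_mul_pi_add (by linarith) (ht1.trans hk)]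
  have hwt : w * |t| ≤ (π + C) * C := by
    have : t * |t| ≤ C * C := by nlinarith [le_abs_self t, abs_nonneg t]
    calc w * |t| = π * (|t| * k) + t * |t| := by ring
      _ ≤ π * C + C * C := by gcongr
      _ = (π + C) * C := by ring
  have hkt : k ^ 2 * t ^ 2 ≤ C ^ 2 := by
    rw [← sq_abs t, ← mul_pow, mul_comm]
    exact pow_le_pow_left₀ (by positivity) htk 2
  have hkwt : k ^ 2 * t ^ 2 * (w * |t|) ≤ C ^ 2 * ((π + C) * C) :=
    mul_le_mul hkt hwt (by positivity) (by positivity)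
  have hε2 : ε * ε = 1 := by rw [← abs_mul_abs_self, hε, one_mul]
  have hlin : w * t - c = ε * π / k + t ^ 2 := by
    simp only [w, ht]; field_simp; ring
  have hD := abs_mul_sin_sub_mul_cos_sub_le w c t
  rw [abs_of_pos hw] at hD
  have hεD : -(w * |t| ^ 3 + |c| * t ^ 2) ≤ ε * (w * sin t - c * cos t - (w * t - c)) := by
    have := neg_abs_le (ε * (w * sin t - c * cos t - (w * t - c)))
    rw [abs_mul, hε, one_mul] at this
    linarith
  have hεt : -t ^ 2 ≤ ε * t ^ 2 := by
    have := neg_abs_le (ε * t ^ 2)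
    rwa [abs_mul, hε, one_mul, abs_sq] at this
  have hεΦ : ε * (w * sin t - c * cos t)
      = π / k + ε * t ^ 2 + ε * (w * sin t - c * cos t - (w * t - c)) := by
    linear_combination ε * hlin + (π / k) * hε2
  have hcube : |t| ^ 3 = t ^ 2 * |t| := by rw [← sq_abs t]; ring
  calc π * k - C ^ 2 * (1 + |c| + (π + C) * C)
      ≤ π * k - k ^ 2 * t ^ 2 - k ^ 2 * t ^ 2 * (w * |t|) - |c| * (k ^ 2 * t ^ 2) := by
        linarith [mul_le_mul_of_nonneg_left hkt (abs_nonneg c)]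
    _ = k ^ 2 * (π / k) + k ^ 2 * -t ^ 2 + k ^ 2 * -(w * |t| ^ 3 + |c| * t ^ 2) := by
        rw [hcube]; field_simp; ring
    _ ≤ k ^ 2 * (π / k) + k ^ 2 * (ε * t ^ 2)
        + k ^ 2 * (ε * (w * sin t - c * cos t - (w * t - c))) := by gcongr
    _ = k ^ 2 * (ε * (w * sin t - c * cos t)) := by rw [hεΦ]; ring

section SinCosCombination

variable {a b : ℝ → ℝ} {p c Ma Mb : ℝ}

lemma abs_mul_sin_add_mul_cos_add_le (ha : ∀ w, 1 ≤ w → |a w + p * w ^ 4| ≤ Ma * w ^ 2)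
    (hb : ∀ w, 1 ≤ w → |b w - p * c * w ^ 3| ≤ Mb * w) {w : ℝ} (hw : 1 ≤ w) (t : ℝ) :
    |a w * sin t + b w * cos t + p * w ^ 3 * (w * sin t - c * cos t)|
      ≤ Ma * w ^ 2 * |t| + Mb * w := by
  calc |a w * sin t + b w * cos t + p * w ^ 3 * (w * sin t - c * cos t)|
      = |(a w + p * w ^ 4) * sin t + (b w - p * c * w ^ 3) * cos t| := by ring_nf
    _ ≤ |a w + p * w ^ 4| * |sin t| + |b w - p * c * w ^ 3| * |cos t| := by
      rw [← abs_mul, ← abs_mul]; exact abs_add_le _ _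
    _ ≤ Ma * w ^ 2 * |t| + Mb * w * 1 := by
      gcongr ?_ + ?_
      · exact mul_le_mul (ha w hw) abs_sin_le_abs (abs_nonneg _)
          ((abs_nonneg _).trans (ha w hw))
      · exact mul_le_mul (hb w hw) (abs_cos_le_one t) (abs_nonneg _)
          ((abs_nonneg _).trans (hb w hw))
    _ = _ := by rw [mul_one]

lemma exists_forall_ge_mul_sin_add_mul_cos_neg (hp : 0 < p)
    (ha : ∀ w, 1 ≤ w → |a w + p * w ^ 4| ≤ Ma * w ^ 2)
    (hb : ∀ w, 1 ≤ w → |b w - p * c * w ^ 3| ≤ Mb * w) :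
    ∃ K, ∀ k ε t : ℝ, K ≤ k → |ε| = 1 → t = c / (k * π) + ε / k ^ 2 →
      ε * (a (k * π + t) * sin t + b (k * π + t) * cos t) < 0 := by
  have hMa : 0 ≤ Ma := by simpa using (abs_nonneg _).trans (ha 1 le_rfl)
  have hMb : 0 ≤ Mb := by simpa using (abs_nonneg _).trans (hb 1 le_rfl)
  set C := |c| + 1
  set L := C ^ 2 * (1 + |c| + (π + C) * C)
  set B := p * L + Ma * C + Mb
  refine ⟨C + B / (p * π), fun k ε t hk hε ht => ?_⟩
  have hkC : C ≤ k := le_add_of_le_of_nonneg le_rfl (by positivity) |>.trans hk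
  have hk1 : 1 ≤ k := (le_add_of_nonneg_left (abs_nonneg c)).trans hkC
  have hBk : B < p * π * k := by
    rw [← div_lt_iff₀' (by positivity)]
    linarith [abs_nonneg c]
  have htk : |t| * k ≤ C := ht ▸ abs_div_add_div_sq_mul_le hk1 hε.le
  set w := k * π + t
  have hwk : k ≤ w := le_mul_pi_add (by linarith) (by nlinarith [abs_nonneg t])
  have hw1 : 1 ≤ w := hk1.trans hwk
  have hmain := sub_le_sq_mul_mul_sin_sub_mul_cos hkC hε ht
  have herr : k ^ 2 * (ε * (a w * sin t + b w * cos t + p * w ^ 3 * (w * sin t - c * cos t)))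
      ≤ (Ma * C + Mb) * w ^ 3 := by
    have hεabs :=
      le_abs_self (ε * (a w * sin t + b w * cos t + p * w ^ 3 * (w * sin t - c * cos t)))
    rw [abs_mul, hε, one_mul] at hεabs
    have hkw : k ^ 2 ≤ w ^ 2 := pow_le_pow_left₀ (by linarith) hwk 2
    calc _ ≤ k ^ 2 * (Ma * w ^ 2 * |t| + Mb * w) :=
          mul_le_mul_of_nonneg_left
            (hεabs.trans (abs_mul_sin_add_mul_cos_add_le ha hb hw1 t)) (by positivity)
      _ = Ma * w ^ 2 * k * (|t| * k) + Mb * w * k ^ 2 := by ring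
      _ ≤ Ma * w ^ 2 * w * C + Mb * w * w ^ 2 := by gcongr
      _ = (Ma * C + Mb) * w ^ 3 := by ring
  have hw3 : 0 < w ^ 3 := by positivity
  refine neg_of_mul_neg_right ?_ (sq_nonneg k)
  calc k ^ 2 * (ε * (a w * sin t + b w * cos t))
      = k ^ 2 * (ε * (a w * sin t + b w * cos t + p * w ^ 3 * (w * sin t - c * cos t)))
        - p * w ^ 3 * (k ^ 2 * (ε * (w * sin t - c * cos t))) := by ring
    _ ≤ (Ma * C + Mb) * w ^ 3 - p * w ^ 3 * (π * k - L) := by gcongr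
    _ = w ^ 3 * (B - p * π * k) := by ring
    _ < 0 := mul_neg_of_pos_of_neg hw3 (by linarith)

lemma neg_one_pow_mul_mul_sin_add_mul_cos (k : ℕ) (t : ℝ) :
    (-1) ^ k * (a (k * π + t) * sin (k * π + t) + b (k * π + t) * cos (k * π + t))
      = a (k * π + t) * sin t + b (k * π + t) * cos t := by
  have h : ((-1 : ℝ) ^ k) ^ 2 = 1 := by rw [← pow_mul, mul_comm, pow_mul, neg_one_sq, one_pow]
  rw [add_comm (k * π) t, sin_add_nat_mul_pi, cos_add_nat_mul_pi]
  linear_combination (a (t + k * π) * sin t + b (t + k * π) * cos t) * h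

theorem eventually_exists_zero_mem_Ioo {G : ℝ → ℝ} (hp : 0 < p) (hGc : Continuous G)
    (hG : ∀ w, G w = a w * sin w + b w * cos w)
    (ha : ∀ w, 1 ≤ w → |a w + p * w ^ 4| ≤ Ma * w ^ 2)
    (hb : ∀ w, 1 ≤ w → |b w - p * c * w ^ 3| ≤ Mb * w) :
    ∀ᶠ k : ℕ in atTop,
      ∃ z ∈ Ioo (k * π + c / (k * π) - 1 / k ^ 2) (k * π + c / (k * π) + 1 / k ^ 2),
        G z = 0 := by
  obtain ⟨K, hK⟩ := exists_forall_ge_mul_sin_add_mul_cos_neg hp ha hb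
  filter_upwards [tendsto_natCast_atTop_atTop.eventually_ge_atTop K] with k hk
  set f := fun w => (-1) ^ k * G w
  have hf (t : ℝ) : f (k * π + t) = a (k * π + t) * sin t + b (k * π + t) * cos t := by
    simp only [f, hG, neg_one_pow_mul_mul_sin_add_mul_cos]
  have hleft : 0 < f (k * π + (c / (k * π) + -1 / k ^ 2)) := by
    rw [hf]; linarith [hK k (-1) _ hk (by simp) rfl]
  have hright : f (k * π + (c / (k * π) + 1 / k ^ 2)) < 0 := by
    rw [hf]; linarith [hK k 1 _ hk (by simp) rfl]
  obtain ⟨z, hz, hfz⟩ := intermediate_value_Ioo' (by gcongr; norm_num)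
    (by fun_prop : Continuous f).continuousOn ⟨hright, hleft⟩
  refine ⟨z, ⟨by linarith [hz.1, neg_div (k ^ 2 : ℝ) 1], by linarith [hz.2]⟩, ?_⟩
  simpa [f] using hfz

end SinCosCombination

lemma eventually_Ioo_subset_Ioo {c : ℝ} (hc : 0 < c) :
    ∀ᶠ k : ℕ in atTop,
      Ioo (k * π + c / (k * π) - 1 / k ^ 2) (k * π + c / (k * π) + 1 / k ^ 2)
        ⊆ Ioo (k * π) ((k + 1) * π) := by
  filter_upwards [tendsto_natCast_atTop_atTop.eventually_ge_atTop (π / c + c + 1)] with k hk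
  have hk1 : 1 ≤ (k : ℝ) := by linarith [div_pos pi_pos hc]
  have hk0 : 0 < (k : ℝ) := by linarith
  refine Ioo_subset_Ioo ?_ ?_
  · have : π ≤ c * k := by
      rw [← div_le_iff₀' hc]; linarith
    have : 1 / (k : ℝ) ^ 2 ≤ c / (k * π) := by
      rw [div_le_div_iff₀ (by positivity) (by positivity)]; nlinarith
    linarith
  · have h := abs_div_add_div_sq_mul_le (c := c) (ε := 1) hk1 (by simp)
    rw [abs_of_pos hc] at h
    have : c / (k * π) + 1 / k ^ 2 < π := by
      refine lt_of_le_of_lt (le_abs_self _) ?_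
      rw [← mul_lt_mul_iff_of_pos_right hk0]
      linarith [mul_lt_mul_of_pos_right pi_gt_three hk0, div_pos pi_pos hc]
    linarith

/-- The large zeros ω_k ∈ (kπ,(k+1)π) of G satisfy
ω_k = kπ + (1/μ0 + 1/μ1)/(kπ) + O(k⁻²). -/
theorem characteristic_zeros_asymptotics
    (μ0 μ1 d0 d1 : ℝ) (hμ0 : 0 < μ0) (hμ1 : 0 < μ1)
    (G : ℝ → ℝ)
    (hG : ∀ ω, G ω = (ω^2 - μ0*μ1*(ω^2 - d0)*(ω^2 - d1)) * Real.sin ω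
        + (μ0*(ω^2 - d0) + μ1*(ω^2 - d1)) * ω * Real.cos ω)
    (ω : ℕ → ℝ) (K₀ : ℕ)
    (hω : ∀ k : ℕ, K₀ ≤ k →
      ω k ∈ Ioo ((k:ℝ)*π) (((k:ℝ)+1)*π) ∧ G (ω k) = 0 ∧
      ∀ ω' ∈ Ioo ((k:ℝ)*π) (((k:ℝ)+1)*π), G ω' = 0 → ω' = ω k) :
    ∃ C : ℝ, 0 < C ∧ ∃ K : ℕ, ∀ k : ℕ, K ≤ k →
      |ω k - (k:ℝ)*π - (1/μ0 + 1/μ1)/((k:ℝ)*π)| ≤ C / (k:ℝ)^2 := by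
  set c := 1 / μ0 + 1 / μ1
  have hGc : Continuous G := by rw [funext hG]; fun_prop
  have ha (w : ℝ) (hw : 1 ≤ w) :
      |w ^ 2 - μ0 * μ1 * (w ^ 2 - d0) * (w ^ 2 - d1) + μ0 * μ1 * w ^ 4|
      ≤ (|1 + μ0 * μ1 * (d0 + d1)| + |-(μ0 * μ1 * d0 * d1)|) * w ^ 2 := by
    convert abs_mul_sq_add_le (1 + μ0 * μ1 * (d0 + d1)) (-(μ0 * μ1 * d0 * d1)) hw using 2
    ring
  have hb (w : ℝ) (hw : 1 ≤ w) :
      |(μ0 * (w ^ 2 - d0) + μ1 * (w ^ 2 - d1)) * w - μ0 * μ1 * c * w ^ 3|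
      ≤ |μ0 * d0 + μ1 * d1| * w := by
    have : (μ0 * (w ^ 2 - d0) + μ1 * (w ^ 2 - d1)) * w - μ0 * μ1 * c * w ^ 3
        = -(μ0 * d0 + μ1 * d1) * w := by
      simp only [c]; field_simp; ring
    rw [this, abs_mul, abs_neg, abs_of_nonneg (by linarith : (0 : ℝ) ≤ w)]
  obtain ⟨K, hK⟩ := eventually_atTop.1
    (((eventually_exists_zero_mem_Ioo (mul_pos hμ0 hμ1) hGc hG ha hb).and
      (eventually_Ioo_subset_Ioo (by positivity : 0 < c))).and (eventually_ge_atTop K₀))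
  refine ⟨1, one_pos, K, fun k hk => ?_⟩
  obtain ⟨⟨⟨z, hz, hGz⟩, hsub⟩, hkK₀⟩ := hK k hk
  obtain rfl := (hω k hkK₀).2.2 z (hsub hz) hGz
  rw [abs_le]
  constructor <;> linarith [hz.1, hz.2]
end

section
/- Fix μ0, μ1 > 0 and real numbers d0 ≥ 0 and d1 ≥ 0, and define H(ω) := e^{−ω}·(ω − μ0·(ω² + d0))·(ω − μ1·(ω² + d1)) − e^{ω}·(ω + μ0·(ω² + d0))·(ω + μ1·(ω² + d1)). Then H(ω) ≠ 0 for every ω > 0; consequently, the string–point-mass eigenvalue problem has no positive eigenvalue when d0 ≥ 0 and d1 ≥ 0. -/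
/-!
With `a = μ0 (ω² + d0)` and `b = μ1 (ω² + d1)` both nonnegative, `(ω - a)(ω - b)` falls short of
`(ω + a)(ω + b)` by `2ω(a + b) ≥ 0`, and `e^{-ω} < e^ω`, so `H(ω) < 0` for `ω > 0`.

For the eigenvalue problem, multiplying `X'' = λX` by `X` and integrating by parts gives
`∫₀¹ (λX² + X'²) = X'(1)X(1) - X'(0)X(0) = -μ1(λ + d1)X(1)² - μ0(λ + d0)X(0)²`.
For `λ > 0` and `d0, d1 ≥ 0` the left side is positive unless `X ≡ 0` and the right side is `≤ 0`.
-/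

open Real Set intervalIntegral

theorem exp_neg_mul_sub_mul_sub_lt {ω a b : ℝ} (hω : 0 < ω) (ha : 0 ≤ a) (hb : 0 ≤ b) :
    exp (-ω) * (ω - a) * (ω - b) < exp ω * (ω + a) * (ω + b) := by
  calc exp (-ω) * (ω - a) * (ω - b) = exp (-ω) * ((ω - a) * (ω - b)) := mul_assoc _ _ _
    _ ≤ exp (-ω) * ((ω + a) * (ω + b)) := by gcongr exp (-ω) * ?_; nlinarith
    _ < exp ω * ((ω + a) * (ω + b)) := by gcongr; linarith
    _ = exp ω * (ω + a) * (ω + b) := (mul_assoc _ _ _).symm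

section EnergyIdentity

variable {X : ℝ → ℝ} {lam a b : ℝ}

theorem integral_deriv_deriv_mul_add_sq (hX : ContDiff ℝ 2 X) :
    ∫ x in a..b, (deriv (deriv X) x * X x + deriv X x ^ 2)
      = deriv X b * X b - deriv X a * X a := by
  have hX' : ContDiff ℝ 1 (deriv X) := hX.iterate_deriv' 1 1
  have hderiv : ∀ x, HasDerivAt (fun y => deriv X y * X y)
      (deriv (deriv X) x * X x + deriv X x ^ 2) x := fun x =>
    ((hX'.differentiable one_ne_zero x).hasDerivAt.mul
      (hX.differentiable two_ne_zero x).hasDerivAt).congr_deriv (by ring)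
  refine integral_eq_sub_of_hasDerivAt (fun x _ => hderiv x) ?_
  exact ((hX'.continuous_deriv le_rfl).mul hX.continuous
    |>.add (hX'.continuous.pow 2)).intervalIntegrable _ _

theorem integral_energy_eq_of_deriv_deriv_eq (hX : ContDiff ℝ 2 X) (hab : a ≤ b)
    (hode : ∀ x ∈ Icc a b, deriv (deriv X) x = lam * X x) :
    ∫ x in a..b, (lam * X x ^ 2 + deriv X x ^ 2) = deriv X b * X b - deriv X a * X a := by
  rw [← integral_deriv_deriv_mul_add_sq hX]
  refine integral_congr fun x hx => ?_
  rw [uIcc_of_le hab] at hx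
  simp only [hode x hx]
  ring

theorem integral_energy_pos (hX : ContDiff ℝ 1 X) (hlam : 0 < lam) (hab : a < b)
    (hne : ∃ x ∈ Icc a b, X x ≠ 0) :
    0 < ∫ x in a..b, (lam * X x ^ 2 + deriv X x ^ 2) := by
  refine integral_pos hab ?_ (fun x _ => by positivity) ?_
  · exact ((continuous_const.mul (hX.continuous.pow 2)).add
      ((hX.continuous_deriv le_rfl).pow 2)).continuousOn
  · obtain ⟨x, hx, hXx⟩ := hne
    exact ⟨x, hx, by positivity⟩

end EnergyIdentity

/-- If d0 ≥ 0 and d1 ≥ 0 then H(ω) ≠ 0 for all ω > 0; hence the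
string–point-mass eigenvalue problem has no positive eigenvalue. -/
theorem no_positive_eigenvalues_of_nonneg_freq_shift
    (μ0 μ1 d0 d1 : ℝ) (hμ0 : 0 < μ0) (hμ1 : 0 < μ1) (hd0 : 0 ≤ d0) (hd1 : 0 ≤ d1) :
    (∀ ω : ℝ, 0 < ω →
      Real.exp (-ω) * (ω - μ0*(ω^2 + d0)) * (ω - μ1*(ω^2 + d1))
        - Real.exp ω * (ω + μ0*(ω^2 + d0)) * (ω + μ1*(ω^2 + d1)) ≠ 0) ∧
    ¬ ∃ (lam : ℝ) (X : ℝ → ℝ), 0 < lam ∧ ContDiff ℝ 2 X ∧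
        (∀ x ∈ Icc (0:ℝ) 1, deriv (deriv X) x = lam * X x) ∧
        deriv X 0 = μ0 * (lam + d0) * X 0 ∧
        deriv X 1 = -μ1 * (lam + d1) * X 1 ∧
        (∃ x ∈ Icc (0:ℝ) 1, X x ≠ 0) := by
  refine ⟨fun ω hω =>
    (sub_neg.mpr (exp_neg_mul_sub_mul_sub_lt hω (by positivity) (by positivity))).ne, ?_⟩
  rintro ⟨lam, X, hlam, hX, hode, hX0, hX1, hne⟩
  have hpos := integral_energy_pos (hX.of_le one_le_two) hlam zero_lt_one hne
  rw [integral_energy_eq_of_deriv_deriv_eq hX zero_le_one hode, hX0, hX1] at hpos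
  have h0 : 0 ≤ μ0 * (lam + d0) * X 0 ^ 2 := by positivity
  have h1 : 0 ≤ μ1 * (lam + d1) * X 1 ^ 2 := by positivity
  nlinarith
end

section
/- Fix μ0, μ1 > 0 and real numbers d0, d1, and define H(ω) := e^{−ω}·(ω − μ0·(ω² + d0))·(ω − μ1·(ω² + d1)) − e^{ω}·(ω + μ0·(ω² + d0))·(ω + μ1·(ω² + d1)). Then the set {ω > 0 : H(ω) = 0} is finite; consequently, the string–point-mass eigenvalue problem has only finitely many (possibly zero) positive eigenvalues. -/
/-!
`H` is entire and, since `e^ω` dominates `e^{-ω}` while both quadratic factors `μᵢ(ω² + dᵢ)`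
eventually exceed `ω`, it is negative for large `ω`. Its positive zeros therefore lie in a compact
interval, where the zeros of a nonzero analytic function are isolated, hence finitely many.
For an eigenvalue `λ = ω²` the combinations `X' ∓ ωX` solve first-order equations, so
`X' ∓ ωX` at `1` is `e^{∓ω}` times its value at `0`; inserting the boundary conditions gives
`X(0) · H(ω) = 0`, and `X(0) ≠ 0` because otherwise `X` vanishes on `[0, 1]`.
-/

open Real Set Filter

/-- The characteristic function `H`. -/
noncomputable def charFun (μ0 μ1 d0 d1 ω : ℝ) : ℝ :=
  exp (-ω) * (ω - μ0*(ω^2 + d0)) * (ω - μ1*(ω^2 + d1))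
    - exp ω * (ω + μ0*(ω^2 + d0)) * (ω + μ1*(ω^2 + d1))

theorem AnalyticOnNhd.finite_inter_preimage_zero_of_isCompact {𝕜 E : Type*}
    [NontriviallyNormedField 𝕜] [PreconnectedSpace 𝕜] [NormedAddCommGroup E] [NormedSpace 𝕜 E] {f : 𝕜 → E}
    (hf : AnalyticOnNhd 𝕜 f univ) (hf0 : ∃ z, f z ≠ 0) {K : Set 𝕜} (hK : IsCompact K) :
    (K ∩ f ⁻¹' {0}).Finite := by
  obtain ⟨w, hw⟩ := hf0
  have hcodiscrete : ∀ᶠ z in codiscreteWithin univ, f z ≠ 0 :=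
    (hf.eqOn_zero_or_eventually_ne_zero_of_preconnected isPreconnected_univ).resolve_left
      fun h => hw (h (mem_univ w))
  refine (hK.finite_sdiff_of_mem_codiscreteWithin
    (codiscreteWithin_mono (subset_univ K) hcodiscrete)).subset ?_
  rintro z ⟨hzK, hz⟩
  exact ⟨hzK, fun hne => hne hz⟩

theorem AnalyticOnNhd.finite_setOf_lt_and_eq_zero {E : Type*} [NormedAddCommGroup E]
    [NormedSpace ℝ E] {f : ℝ → E} (hf : AnalyticOnNhd ℝ f univ)
    (hf_atTop : ∀ᶠ x in atTop, f x ≠ 0) (a : ℝ) : {x | a < x ∧ f x = 0}.Finite := by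
  obtain ⟨R, hR⟩ := eventually_atTop.mp hf_atTop
  refine (hf.finite_inter_preimage_zero_of_isCompact ⟨R, hR R le_rfl⟩
    (isCompact_Icc (a := a) (b := R))).subset ?_
  rintro x ⟨hax, hx⟩
  exact ⟨⟨hax.le, le_of_not_gt fun hRx => hR x hRx.le hx⟩, hx⟩

theorem analyticOnNhd_charFun (μ0 μ1 d0 d1 : ℝ) : AnalyticOnNhd ℝ (charFun μ0 μ1 d0 d1) univ := by
  intro ω _
  unfold charFun
  fun_prop

theorem eventually_lt_mul_sq_add {μ : ℝ} (hμ : 0 < μ) (d : ℝ) :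
    ∀ᶠ ω in atTop, ω < μ * (ω^2 + d) := by
  filter_upwards [eventually_ge_atTop (2 / μ), eventually_gt_atTop (μ * |d|)] with ω h2 hd
  have hω : 0 < ω := (div_pos two_pos hμ).trans_le h2
  have hquad : 2 * ω ≤ μ * ω * ω :=
    mul_le_mul_of_nonneg_right (by rwa [div_le_iff₀' hμ] at h2) hω.le
  have hconst : -(μ * |d|) ≤ μ * d := by nlinarith [neg_abs_le d]
  linarith

theorem eventually_charFun_neg {μ0 μ1 : ℝ} (d0 d1 : ℝ) (hμ0 : 0 < μ0) (hμ1 : 0 < μ1) :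
    ∀ᶠ ω in atTop, charFun μ0 μ1 d0 d1 ω < 0 := by
  filter_upwards [eventually_gt_atTop 0, eventually_lt_mul_sq_add hμ0 d0,
    eventually_lt_mul_sq_add hμ1 d1] with ω hω h0 h1
  set p0 := μ0 * (ω^2 + d0)
  set p1 := μ1 * (ω^2 + d1)
  have hfactors : (p0 - ω) * (p1 - ω) < (ω + p0) * (ω + p1) := by nlinarith
  have hexp : exp (-ω) < exp ω := exp_lt_exp.2 (by linarith)
  have hcharFun : charFun μ0 μ1 d0 d1 ω
      = exp (-ω) * ((p0 - ω) * (p1 - ω)) - exp ω * ((ω + p0) * (ω + p1)) := by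
    unfold charFun; ring
  rw [hcharFun, sub_neg]
  exact (mul_lt_mul_of_pos_left hfactors (exp_pos _)).trans
    (mul_lt_mul_of_pos_right hexp (by nlinarith))

theorem finite_setOf_pos_charFun_eq_zero {μ0 μ1 : ℝ} (d0 d1 : ℝ) (hμ0 : 0 < μ0) (hμ1 : 0 < μ1) :
    {ω | 0 < ω ∧ charFun μ0 μ1 d0 d1 ω = 0}.Finite :=
  (analyticOnNhd_charFun μ0 μ1 d0 d1).finite_setOf_lt_and_eq_zero
    ((eventually_charFun_neg d0 d1 hμ0 hμ1).mono fun _ h => h.ne) 0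

theorem eq_exp_mul_of_hasDerivAt {f : ℝ → ℝ} {c a b : ℝ}
    (hf : ∀ x ∈ Icc a b, HasDerivAt f (c * f x) x) {x : ℝ} (hx : x ∈ Icc a b) :
    f x = exp (c * (x - a)) * f a := by
  set g : ℝ → ℝ := fun x => exp (-(c * (x - a))) * f x
  have hg : ∀ x ∈ Icc a b, HasDerivAt g 0 x := by
    intro x hx
    have h := ((((hasDerivAt_id' x).sub_const a).const_mul c).neg.exp).mul (hf x hx)
    exact h.congr_deriv (by ring)
  have hconst := constant_of_has_deriv_right_zero
    (fun x hx => (hg x hx).continuousAt.continuousWithinAt)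
    (fun x hx => (hg x (Ico_subset_Icc_self hx)).hasDerivWithinAt) x hx
  simp only [g, sub_self, mul_zero, neg_zero, exp_zero, one_mul] at hconst
  rw [← hconst, ← mul_assoc, ← exp_add, add_neg_cancel, exp_zero, one_mul]

theorem deriv_sub_mul_eq_exp_mul {X : ℝ → ℝ} {c a b : ℝ} (hX : ContDiff ℝ 2 X)
    (hode : ∀ x ∈ Icc a b, deriv (deriv X) x = c^2 * X x) {x : ℝ} (hx : x ∈ Icc a b) :
    deriv X x - c * X x = exp (-c * (x - a)) * (deriv X a - c * X a) := by
  refine eq_exp_mul_of_hasDerivAt (f := fun x => deriv X x - c * X x) (fun y hy => ?_) hx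
  have h := (hX.differentiable_deriv_two y).hasDerivAt.sub
    ((hX.differentiable two_ne_zero y).hasDerivAt.const_mul c)
  exact h.congr_deriv (by rw [hode y hy]; ring)

theorem charFun_eq_zero_of_eigenfunction {μ0 μ1 d0 d1 ω : ℝ} (hω : 0 < ω) {X : ℝ → ℝ}
    (hX : ContDiff ℝ 2 X) (hode : ∀ x ∈ Icc (0:ℝ) 1, deriv (deriv X) x = ω^2 * X x)
    (h0 : deriv X 0 = μ0 * (ω^2 + d0) * X 0) (h1 : deriv X 1 = -μ1 * (ω^2 + d1) * X 1)
    (hne : ∃ x ∈ Icc (0:ℝ) 1, X x ≠ 0) : charFun μ0 μ1 d0 d1 ω = 0 := by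
  have hode' : ∀ x ∈ Icc (0:ℝ) 1, deriv (deriv X) x = (-ω)^2 * X x := by simpa only [neg_sq]
  have hminus := fun x (hx : x ∈ Icc (0:ℝ) 1) => deriv_sub_mul_eq_exp_mul hX hode hx
  have hplus := fun x (hx : x ∈ Icc (0:ℝ) 1) => deriv_sub_mul_eq_exp_mul hX hode' hx
  have hX0 : X 0 ≠ 0 := by
    obtain ⟨x, hx, hXx⟩ := hne
    contrapose! hXx
    have hm := hminus x hx
    have hp := hplus x hx
    rw [h0, hXx] at hm hp
    have : 2 * ω * X x = 0 := by linear_combination hp - hm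
    simpa [hω.ne'] using this
  have hm := hminus 1 ⟨zero_le_one, le_rfl⟩
  have hp := hplus 1 ⟨zero_le_one, le_rfl⟩
  rw [h0, h1] at hm hp
  simp only [sub_zero, mul_one, neg_neg] at hm hp
  refine (mul_eq_zero.mp ?_).resolve_left hX0
  unfold charFun
  linear_combination (ω - μ1 * (ω^2 + d1)) * hm + (ω + μ1 * (ω^2 + d1)) * hp

/-- The set of positive zeros of H is finite; hence the
string–point-mass eigenvalue problem has only finitely many positive
eigenvalues. -/
theorem finitely_many_positive_eigenvalues
    (μ0 μ1 d0 d1 : ℝ) (hμ0 : 0 < μ0) (hμ1 : 0 < μ1) :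
    {ω : ℝ | 0 < ω ∧
      Real.exp (-ω) * (ω - μ0*(ω^2 + d0)) * (ω - μ1*(ω^2 + d1))
        - Real.exp ω * (ω + μ0*(ω^2 + d0)) * (ω + μ1*(ω^2 + d1)) = 0}.Finite ∧
    {lam : ℝ | 0 < lam ∧ ∃ X : ℝ → ℝ, ContDiff ℝ 2 X ∧
        (∀ x ∈ Icc (0:ℝ) 1, deriv (deriv X) x = lam * X x) ∧
        deriv X 0 = μ0 * (lam + d0) * X 0 ∧
        deriv X 1 = -μ1 * (lam + d1) * X 1 ∧
        (∃ x ∈ Icc (0:ℝ) 1, X x ≠ 0)}.Finite := by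
  have hzeros : {ω | 0 < ω ∧ charFun μ0 μ1 d0 d1 ω = 0}.Finite :=
    finite_setOf_pos_charFun_eq_zero d0 d1 hμ0 hμ1
  refine ⟨hzeros, (hzeros.image (· ^ 2)).subset ?_⟩
  rintro lam ⟨hlam, X, hX, hode, h0, h1, hne⟩
  have hω : 0 < √lam := sqrt_pos.2 hlam
  have hsq : √lam ^ 2 = lam := sq_sqrt hlam.le
  rw [← hsq] at hode h0 h1
  exact ⟨√lam, ⟨hω, charFun_eq_zero_of_eigenfunction hω hX hode h0 h1 hne⟩, hsq⟩
end

section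
/- Fix μ0, μ1 > 0, ω̃ > 0 and ω̃0, ω̃1 ∈ ℝ, and set d_j := ω̃_j² − ω̃² for j ∈ {0,1}. If X ∈ C²([0,1],ℝ) is not identically zero and satisfies X''(x) = λ·X(x) on [0,1], X'(0) = μ0·(λ + d0)·X(0) and X'(1) = −μ1·(λ + d1)·X(1) for some λ ∈ ℝ, then λ < ω̃². (Equivalently, all the frequencies √(ω̃² − λ_n) of the normal modes are real and positive.) -/
open Real Set

theorem integral_mul_deriv_deriv_eq {f : ℝ → ℝ} (hf : ContDiff ℝ 2 f) (a b : ℝ) :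
    ∫ x in a..b, f x * deriv (deriv f) x
      = f b * deriv f b - f a * deriv f a - ∫ x in a..b, deriv f x ^ 2 := by
  have hf' : ContDiff ℝ 1 (deriv f) := hf.iterate_deriv' 1 1
  have hibp := intervalIntegral.integral_mul_deriv_eq_deriv_mul
    (fun x _ => (hf.differentiable two_ne_zero x).hasDerivAt)
    (fun x _ => (hf'.differentiable one_ne_zero x).hasDerivAt)
    (hf'.continuous.intervalIntegrable a b)
    ((hf'.continuous_deriv le_rfl).intervalIntegrable a b)
  simpa only [sq] using hibp

theorem eigenvalue_mul_integral_sq_eq {f : ℝ → ℝ} {lam a b : ℝ} (hab : a ≤ b)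
    (hf : ContDiff ℝ 2 f) (hode : ∀ x ∈ Icc a b, deriv (deriv f) x = lam * f x) :
    lam * ∫ x in a..b, f x ^ 2
      = f b * deriv f b - f a * deriv f a - ∫ x in a..b, deriv f x ^ 2 := by
  rw [← integral_mul_deriv_deriv_eq hf, ← intervalIntegral.integral_const_mul]
  refine intervalIntegral.integral_congr fun x hx => ?_
  rw [uIcc_of_le hab] at hx
  simp only [hode x hx]
  ring

/-- With d_j = ω̃_j² - ω̃², every eigenvalue λ of the
string–point-mass problem with a nontrivial C² eigenfunction satisfies
λ < ω̃². -/
theorem eigenvalues_bounded_above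
    (μ0 μ1 ωt ω0 ω1 d0 d1 : ℝ) (hμ0 : 0 < μ0) (hμ1 : 0 < μ1) (hωt : 0 < ωt)
    (hd0 : d0 = ω0^2 - ωt^2) (hd1 : d1 = ω1^2 - ωt^2)
    (lam : ℝ) (X : ℝ → ℝ) (hX : ContDiff ℝ 2 X)
    (hode : ∀ x ∈ Icc (0:ℝ) 1, deriv (deriv X) x = lam * X x)
    (hbc0 : deriv X 0 = μ0 * (lam + d0) * X 0)
    (hbc1 : deriv X 1 = -μ1 * (lam + d1) * X 1)
    (hne : ∃ x ∈ Icc (0:ℝ) 1, X x ≠ 0) :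
    lam < ωt^2 := by
  obtain ⟨c, hc, hXc⟩ := hne
  have hnorm_pos : 0 < ∫ x in (0:ℝ)..1, X x ^ 2 :=
    intervalIntegral.integral_pos zero_lt_one (hX.continuous.pow 2).continuousOn
      (fun x _ => sq_nonneg _) ⟨c, hc, by positivity⟩
  have hgrad_nonneg : 0 ≤ ∫ x in (0:ℝ)..1, deriv X x ^ 2 :=
    intervalIntegral.integral_nonneg zero_le_one fun x _ => sq_nonneg _
  have henergy := eigenvalue_mul_integral_sq_eq zero_le_one hX hode
  rw [hbc0, hbc1] at henergy
  by_contra! hlam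
  -- For `λ ≥ ω̃²` the boundary terms `-μ_j (λ + d_j) X(j)²` are `≤ 0`, so `λ ∫ X² ≤ 0`,
  -- against `λ > 0` and `∫ X² > 0`.
  have hboundary0 : 0 ≤ μ0 * (lam + d0) * X 0 ^ 2 := by
    have : 0 ≤ lam + d0 := by nlinarith [sq_nonneg ω0]
    positivity
  have hboundary1 : 0 ≤ μ1 * (lam + d1) * X 1 ^ 2 := by
    have : 0 ≤ lam + d1 := by nlinarith [sq_nonneg ω1]
    positivity
  have hlam_pos : 0 < lam := lt_of_lt_of_le (by positivity) hlam
  nlinarith [mul_pos hlam_pos hnorm_pos]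
end

section
/- Fix μ0, μ1 > 0 and real numbers d0, d1. Let X_m, X_n ∈ C²([0,1],ℝ) and λ_m, λ_n ∈ ℝ with λ_m ≠ λ_n satisfy, for i ∈ {m,n}: X_i'' = λ_i·X_i on [0,1], X_i'(0) = μ0·(λ_i + d0)·X_i(0) and X_i'(1) = −μ1·(λ_i + d1)·X_i(1). Then X_m and X_n are orthogonal with respect to the modified scalar product, i.e. μ0·X_m(0)·X_n(0) + μ1·X_m(1)·X_n(1) + ∫₀¹ X_m(x)·X_n(x) dx = 0. -/
open Set

/-! With the Wronskian `W = X_m X_n' - X_n X_m'`, the equations `X'' = λ X` give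
`W' = (λ_n - λ_m) X_m X_n`, so `(λ_n - λ_m) ∫₀¹ X_m X_n = W(1) - W(0)`. The boundary conditions
turn `W(1) - W(0)` into `-(λ_n - λ_m) (μ₁ X_m(1) X_n(1) + μ₀ X_m(0) X_n(0))`; the `d`-terms cancel
because they enter both boundary conditions with the same coefficient, and dividing by
`λ_n - λ_m ≠ 0` gives the orthogonality. -/

noncomputable def wronskian (f g : ℝ → ℝ) (x : ℝ) : ℝ :=
  f x * deriv g x - g x * deriv f x

theorem hasDerivAt_wronskian {f g : ℝ → ℝ} {x : ℝ} (hf : DifferentiableAt ℝ f x)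
    (hg : DifferentiableAt ℝ g x) (hf' : DifferentiableAt ℝ (deriv f) x)
    (hg' : DifferentiableAt ℝ (deriv g) x) :
    HasDerivAt (wronskian f g) (f x * deriv (deriv g) x - g x * deriv (deriv f) x) x :=
  ((hf.hasDerivAt.mul hg'.hasDerivAt).sub (hg.hasDerivAt.mul hf'.hasDerivAt)).congr_deriv
    (by ring)

theorem ContDiff.differentiable_deriv_of_two {f : ℝ → ℝ} (hf : ContDiff ℝ 2 f) :
    Differentiable ℝ (deriv f) :=
  (contDiff_succ_iff_deriv.mp hf).2.2.differentiable one_ne_zero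

theorem ContDiff.continuous_deriv_deriv_of_two {f : ℝ → ℝ} (hf : ContDiff ℝ 2 f) :
    Continuous (deriv (deriv f)) :=
  (contDiff_succ_iff_deriv.mp hf).2.2.continuous_deriv le_rfl

theorem integral_mul_deriv_deriv_sub_eq_wronskian_sub {f g : ℝ → ℝ} (hf : ContDiff ℝ 2 f)
    (hg : ContDiff ℝ 2 g) (a b : ℝ) :
    ∫ x in a..b, (f x * deriv (deriv g) x - g x * deriv (deriv f) x) =
      wronskian f g b - wronskian f g a := by
  refine intervalIntegral.integral_eq_sub_of_hasDerivAt (fun x _ => ?_) ?_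
  · exact hasDerivAt_wronskian (hf.differentiable two_ne_zero x)
      (hg.differentiable two_ne_zero x) (hf.differentiable_deriv_of_two x)
      (hg.differentiable_deriv_of_two x)
  · exact ((hf.continuous.mul hg.continuous_deriv_deriv_of_two).sub
      (hg.continuous.mul hf.continuous_deriv_deriv_of_two)).intervalIntegrable a b

theorem sub_mul_integral_mul_eq_wronskian_sub {f g : ℝ → ℝ} {a b lf lg : ℝ} (hab : a ≤ b)
    (hf : ContDiff ℝ 2 f) (hg : ContDiff ℝ 2 g)
    (hf'' : ∀ x ∈ Icc a b, deriv (deriv f) x = lf * f x)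
    (hg'' : ∀ x ∈ Icc a b, deriv (deriv g) x = lg * g x) :
    (lg - lf) * ∫ x in a..b, f x * g x = wronskian f g b - wronskian f g a := by
  rw [← intervalIntegral.integral_const_mul, ← integral_mul_deriv_deriv_sub_eq_wronskian_sub hf hg]
  refine intervalIntegral.integral_congr fun x hx => ?_
  rw [uIcc_of_le hab] at hx
  simp only [hf'' x hx, hg'' x hx]
  ring

theorem eigenfunctions_orthogonal_modified_product_general
    (μ0 μ1 d0 d1 : ℝ)
    (Xm Xn : ℝ → ℝ) (lamm lamn : ℝ) (hne : lamm ≠ lamn)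
    (hXm : ContDiff ℝ 2 Xm) (hXn : ContDiff ℝ 2 Xn)
    (hodem : ∀ x ∈ Icc (0:ℝ) 1, deriv (deriv Xm) x = lamm * Xm x)
    (hoden : ∀ x ∈ Icc (0:ℝ) 1, deriv (deriv Xn) x = lamn * Xn x)
    (hbc0m : deriv Xm 0 = μ0 * (lamm + d0) * Xm 0)
    (hbc1m : deriv Xm 1 = -μ1 * (lamm + d1) * Xm 1)
    (hbc0n : deriv Xn 0 = μ0 * (lamn + d0) * Xn 0)
    (hbc1n : deriv Xn 1 = -μ1 * (lamn + d1) * Xn 1) :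
    μ0 * Xm 0 * Xn 0 + μ1 * Xm 1 * Xn 1 + ∫ x in (0:ℝ)..1, Xm x * Xn x = 0 := by
  have hgreen := sub_mul_integral_mul_eq_wronskian_sub zero_le_one hXm hXn hodem hoden
  have hW1 : wronskian Xm Xn 1 = (lamn - lamm) * (-μ1 * Xm 1 * Xn 1) := by
    rw [wronskian, hbc1m, hbc1n]; ring
  have hW0 : wronskian Xm Xn 0 = (lamn - lamm) * (μ0 * Xm 0 * Xn 0) := by
    rw [wronskian, hbc0m, hbc0n]; ring
  rw [hW1, hW0] at hgreen
  refine (mul_eq_zero.mp ?_).resolve_left (sub_ne_zero.mpr hne.symm)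
  linear_combination hgreen

/-- Eigenfunctions of the string–point-mass problem associated
with distinct eigenvalues are orthogonal with respect to the modified scalar
product ⟨⟨u,v⟩⟩ = μ0 u(0)v(0) + μ1 u(1)v(1) + ∫₀¹ u v. -/
theorem eigenfunctions_orthogonal_modified_product
    (μ0 μ1 d0 d1 : ℝ) (hμ0 : 0 < μ0) (hμ1 : 0 < μ1)
    (Xm Xn : ℝ → ℝ) (lamm lamn : ℝ) (hne : lamm ≠ lamn)
    (hXm : ContDiff ℝ 2 Xm) (hXn : ContDiff ℝ 2 Xn)
    (hodem : ∀ x ∈ Icc (0:ℝ) 1, deriv (deriv Xm) x = lamm * Xm x)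
    (hoden : ∀ x ∈ Icc (0:ℝ) 1, deriv (deriv Xn) x = lamn * Xn x)
    (hbc0m : deriv Xm 0 = μ0 * (lamm + d0) * Xm 0)
    (hbc1m : deriv Xm 1 = -μ1 * (lamm + d1) * Xm 1)
    (hbc0n : deriv Xn 0 = μ0 * (lamn + d0) * Xn 0)
    (hbc1n : deriv Xn 1 = -μ1 * (lamn + d1) * Xn 1) :
    μ0 * Xm 0 * Xn 0 + μ1 * Xm 1 * Xn 1 + ∫ x in (0:ℝ)..1, Xm x * Xn x = 0 :=
  eigenfunctions_orthogonal_modified_product_general μ0 μ1 d0 d1 Xm Xn lamm lamn hne hXm hXn hodem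
    hoden hbc0m hbc1m hbc0n hbc1n
end

section
/- Let μ > 0, d ∈ ℝ and ω̃ ∈ ℝ, and let α > 0 satisfy α·(1 − α·μ·d)² = μ and α·μ·d ≠ 1. Define A := μ·d/(1 − α·μ·d). Then for every u₀ ∈ ℝ, setting γ := (1 + α·A)·u₀, one has α·A²·u₀² + A·u₀² + ω̃²·α·u₀² = μ·(d + ω̃²)·γ². (With d = ω̃_b² − ω̃² this reads: the boundary contribution to the Hamiltonian equals μ·ω̃_b²·γ², which is nonnegative; this yields positivity of the Hamiltonian restricted to the constraint submanifold.) -/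
/-! With `s := 1 - α μ d` one has `1 + α A = s⁻¹`, so `γ = u₀ / s`, while the constraint
`α s² = μ` gives `α = μ / s²`. Hence `α A² + A = A (1 + α A) = μ d / s²` and
`ω̃² α = ω̃² μ / s²`, and both sides equal `μ (d + ω̃²) u₀² / s²`. -/

theorem boundary_hamiltonian_contribution_general
    (μ d ωt α : ℝ)
    (hcube : α * (1 - α*μ*d)^2 = μ) (hne : α*μ*d ≠ 1)
    (A : ℝ) (hA : A = μ*d / (1 - α*μ*d)) :
    ∀ u0 : ℝ, α * A^2 * u0^2 + A * u0^2 + ωt^2 * α * u0^2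
      = μ * (d + ωt^2) * ((1 + α*A) * u0)^2 := by
  intro u0
  set s := 1 - α*μ*d with hs_def
  have hs : s ≠ 0 := sub_ne_zero.mpr hne.symm
  have hγ : 1 + α * A = s⁻¹ := by
    rw [hA, hs_def]
    field_simp
    ring
  have hα : α = μ / s^2 := by rw [← hcube]; field_simp
  calc α * A^2 * u0^2 + A * u0^2 + ωt^2 * α * u0^2
      = (A * (1 + α * A) + ωt^2 * α) * u0^2 := by ring
    _ = μ * (d + ωt^2) * (s⁻¹ * u0)^2 := by
      rw [hγ, hA, hα]
      field_simp
    _ = μ * (d + ωt^2) * ((1 + α*A) * u0)^2 := by rw [hγ]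

/-- The boundary contribution to the Hamiltonian on the
constraint submanifold equals μ(d + ω̃²)γ², where γ = (1 + αA)u₀. -/
theorem boundary_hamiltonian_contribution
    (μ d ωt α : ℝ) (hμ : 0 < μ) (hα : 0 < α)
    (hcube : α * (1 - α*μ*d)^2 = μ) (hne : α*μ*d ≠ 1)
    (A : ℝ) (hA : A = μ*d / (1 - α*μ*d)) :
    ∀ u0 : ℝ, α * A^2 * u0^2 + A * u0^2 + ωt^2 * α * u0^2
      = μ * (d + ωt^2) * ((1 + α*A) * u0)^2 :=
  boundary_hamiltonian_contribution_general μ d ωt α hcube hne A hA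
end

section
/- Fix j ∈ {0,1}, μ_j > 0 and d_j ∈ ℝ, and let α_j > 0 satisfy α_j·(1 − α_j·μ_j·d_j)² = μ_j with α_j·μ_j·d_j ≠ 1; set A_j := μ_j·d_j/(1 − α_j·μ_j·d_j). Let λ ∈ ℝ, let Ỹ ∈ C²([0,1],ℝ) and Y_j ∈ ℝ satisfy the Robin-like boundary condition Ỹ(j) = (1 + α_j·A_j)·Y_j together with the boundary eigenvalue equation (1 + α_j·A_j)·(−1)^j·( Ỹ'(j) − (−1)^j·(Ỹ(j) − Y_j)/α_j )/α_j = λ·Y_j. Then Ỹ'(j) = (−1)^j·μ_j·(λ + d_j)·Ỹ(j). (Hence the eigenvalue problem Δ_μ Y = λY with Robin-like boundary conditions reproduces exactly the λ-dependent boundary conditions X'(0) = μ0·(λ + d0)·X(0), X'(1) = −μ1·(λ + d1)·X(1) of the original string–point-mass system; this is the content of Proposition 1.) -/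
/-- The eigenvalue problem Δ_μ Y = λ Y with Robin-like boundary
conditions reproduces the λ-dependent boundary conditions
Ỹ'(j) = (-1)^j μ_j (λ + d_j) Ỹ(j) of the string–point-mass system. -/
theorem robin_like_reproduces_physical_boundary_condition
    (j : ℕ) (hj : j = 0 ∨ j = 1)
    (μj dj αj Aj lam : ℝ) (hμ : 0 < μj) (hα : 0 < αj)
    (hcube : αj * (1 - αj*μj*dj)^2 = μj) (hne : αj*μj*dj ≠ 1)
    (hA : Aj = μj*dj / (1 - αj*μj*dj))
    (Y : ℝ → ℝ) (Yj : ℝ)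
    (hRobin : Y (j:ℝ) = (1 + αj*Aj) * Yj)
    (heig : (1 + αj*Aj) * ((-1:ℝ)^j
        * (deriv Y (j:ℝ) - (-1:ℝ)^j * (Y (j:ℝ) - Yj)/αj)) / αj = lam * Yj) :
    deriv Y (j:ℝ) = (-1:ℝ)^j * μj * (lam + dj) * Y (j:ℝ) := by
  have hs : (1 - αj*μj*dj) ≠ 0 := sub_ne_zero.mpr fun h => hne h.symm
  have hA1 : 1 + αj*Aj = 1 / (1 - αj*μj*dj) := by
    rw [hA]; field_simp; ring
  have he : ((-1:ℝ)^j)^2 = 1 := by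
    rcases hj with h | h <;> subst h <;> norm_num
  rw [hA1] at hRobin heig
  have hα' : αj ≠ 0 := ne_of_gt hα
  set D := deriv Y (j:ℝ) with hD
  set e := (-1:ℝ)^j
  set X := Y (j:ℝ)
  -- from Robin: Yj = (1 - αj*μj*dj) * X
  have hY : Yj = (1 - αj*μj*dj) * X := by
    field_simp at hRobin; linarith [hRobin]
  rw [hY] at heig
  field_simp at heig
  -- heig is now a polynomial identity; derive the goal
  have he2 : e * e = 1 := by nlinarith [he]
  have key : e * D = μj * (lam + dj) * X := by
    have keyα : (e * D) * αj = (μj * (lam + dj) * X) * αj := by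
      linear_combination heig + αj*μj*dj*X*he2 + lam*X*αj*hcube
    exact mul_right_cancel₀ hα' keyα
  have : D = e * (μj * (lam + dj) * X) := by
    have he2 : e * e = 1 := by nlinarith [he]
    calc D = (e*e) * D := by rw [he2]; ring
    _ = e * (e*D) := by ring
    _ = e * (μj * (lam + dj) * X) := by rw [key]
  rw [this]; ring
end

section
/- Fix μ0, μ1 > 0 and real numbers d0, d1, and for each sufficiently large k ∈ ℕ let ω_k ∈ (kπ, (k+1)π) be the unique solution in that interval of the characteristic equation (ω² − μ0·μ1·(ω² − d0)·(ω² − d1))·sin ω + (μ0·(ω² − d0) + μ1·(ω² − d1))·ω·cos ω = 0, and let X_k(x) := ω_k·cos(ω_k x) + μ0·(d0 − ω_k²)·sin(ω_k x) be the associated eigenfunction. Define the squared norm N_k := μ0·X_k(0)² + μ1·X_k(1)² + ∫₀¹ X_k(x)² dx. Then lim_{k→∞} N_k/ω_k⁴ = μ0²/2; equivalently, the normalization constants g_k := √N_k satisfy g_k = (μ0/√2)·ω_k²·(1 + o(1)) as k → ∞. -/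
/-!
Since `ω_k > kπ`, `ω_k → ∞`. In the characteristic equation the coefficient of `sin ω` is a
polynomial of degree 4 in `ω` (leading coefficient `-μ0 μ1 ≠ 0`) and that of `cos ω` one of
degree 3, so `sin ω_k = O(1/ω_k) → 0`. Computing the integral of `X_k²` in closed form,
`N_k / ω_k⁴` becomes a polynomial in `1/ω_k`, `sin ω_k`, `cos ω_k / ω_k` and
`μ0 (d0 - ω_k²) / ω_k² → -μ0`, whose only non-vanishing term in the limit is
`(μ0 (d0 - ω_k²) / ω_k²)² / 2 → μ0² / 2`.
-/

open Real Set Filter Topology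

lemma integral_sq_cos_add_sin (a b w : ℝ) (hw : w ≠ 0) :
    ∫ x in (0:ℝ)..1, (a * cos (w * x) + b * sin (w * x)) ^ 2
      = (a ^ 2 + b ^ 2) / 2 + (a ^ 2 - b ^ 2) * (sin w * cos w) / (2 * w)
        + a * b * sin w ^ 2 / w := by
  have hderiv (x : ℝ) : HasDerivAt
      (fun x => (a ^ 2 + b ^ 2) / 2 * x + (a ^ 2 - b ^ 2) * (sin (w * x) * cos (w * x)) / (2 * w)
        + a * b * sin (w * x) ^ 2 / w)
      ((a * cos (w * x) + b * sin (w * x)) ^ 2) x := by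
    have hwx : HasDerivAt (fun x => w * x) w x := by simpa using (hasDerivAt_id x).const_mul w
    have hs := (hasDerivAt_sin _).comp x hwx
    have hc := (hasDerivAt_cos _).comp x hwx
    refine ((((hasDerivAt_id x).const_mul ((a ^ 2 + b ^ 2) / 2)).add
      (((hs.mul hc).const_mul (a ^ 2 - b ^ 2)).div_const (2 * w))).add
      ((hs.pow 2).const_mul (a * b) |>.div_const w)).congr_deriv ?_
    simp only [Function.comp_apply]
    field_simp
    linear_combination (-(a ^ 2 + b ^ 2)) * sin_sq_add_cos_sq (w * x)
  rw [intervalIntegral.integral_eq_sub_of_hasDerivAt (fun x _ => hderiv x)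
    (by apply Continuous.intervalIntegrable; fun_prop)]
  simp

section

open Polynomial

variable {α : Type*} {l : Filter α}

lemma tendsto_sin_of_eval_mul_sin_add_eval_mul_cos_eq_zero {D P : ℝ[X]}
    (hdeg : P.degree < D.degree) {ω : α → ℝ} (hω : Tendsto ω l atTop)
    (h : ∀ᶠ k in l, D.eval (ω k) * sin (ω k) + P.eval (ω k) * cos (ω k) = 0) :
    Tendsto (fun k => sin (ω k)) l (𝓝 0) := by
  have hD : D ≠ 0 := by rintro rfl; simp at hdeg
  have hratio := (div_tendsto_atTop_zero_of_degree_lt P D hdeg).comp hω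
  refine squeeze_zero_norm' ?_ (by simpa only [norm_zero] using hratio.norm)
  filter_upwards [h, hω.eventually (eventually_atTop_not_isRoot D hD)] with k hk
    (hroot : D.eval (ω k) ≠ 0)
  have hsin : sin (ω k) = -(P.eval (ω k) / D.eval (ω k)) * cos (ω k) := by
    field_simp
    linear_combination hk
  rw [hsin, norm_mul, norm_neg, Real.norm_eq_abs (cos _)]
  exact mul_le_of_le_one_right (norm_nonneg _) (abs_cos_le_one _)

lemma tendsto_sin_of_characteristic_eq_zero {μ0 μ1 d0 d1 : ℝ}
    (hμ0 : μ0 ≠ 0) (hμ1 : μ1 ≠ 0)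
    {ω : α → ℝ} (hω : Tendsto ω l atTop)
    (h : ∀ᶠ k in l, (ω k ^ 2 - μ0 * μ1 * (ω k ^ 2 - d0) * (ω k ^ 2 - d1)) * sin (ω k)
      + (μ0 * (ω k ^ 2 - d0) + μ1 * (ω k ^ 2 - d1)) * ω k * cos (ω k) = 0) :
    Tendsto (fun k => sin (ω k)) l (𝓝 0) := by
  have hD : (X ^ 2 - C (μ0 * μ1) * (X ^ 2 - C d0) * (X ^ 2 - C d1) : ℝ[X]).degree = 4 := by
    compute_degree!
  refine tendsto_sin_of_eval_mul_sin_add_eval_mul_cos_eq_zero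
    (P := C (μ0 + μ1) * X ^ 3 - C (μ0 * d0 + μ1 * d1) * X) (by rw [hD]; compute_degree!) hω ?_
  filter_upwards [h] with k hk
  simp only [eval_sub, eval_mul, eval_pow, eval_C, eval_X]
  linear_combination hk

lemma tendsto_boundary_add_integral_sq_div_pow_four {μ0 μ1 β : ℝ} {ω b : α → ℝ}
    (hω : Tendsto ω l atTop) (hsin : Tendsto (fun k => sin (ω k)) l (𝓝 0))
    (hb : Tendsto (fun k => b k / ω k ^ 2) l (𝓝 β)) :
    Tendsto (fun k => (μ0 * ω k ^ 2 + μ1 * (ω k * cos (ω k) + b k * sin (ω k)) ^ 2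
      + ∫ x in (0:ℝ)..1, (ω k * cos (ω k * x) + b k * sin (ω k * x)) ^ 2) / ω k ^ 4)
      l (𝓝 (β ^ 2 / 2)) := by
  set u := fun k => (ω k)⁻¹
  have hu : Tendsto u l (𝓝 0) := hω.inv_tendsto_atTop
  have hcu : Tendsto (fun k => cos (ω k) * u k) l (𝓝 0) := by
    refine squeeze_zero_norm (fun k => ?_) (by simpa using hu.norm)
    rw [norm_mul]
    exact mul_le_of_le_one_left (norm_nonneg _) (abs_cos_le_one _)
  -- `N / ω⁴` as a polynomial in `p = (ω⁻¹, sin ω, cos ω · ω⁻¹, b / ω²)`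
  have hΦ : Continuous fun p : ℝ × ℝ × ℝ × ℝ =>
      μ0 * p.1 ^ 2 + μ1 * (p.2.2.1 + p.2.2.2 * p.2.1) ^ 2
      + (p.1 ^ 2 + p.2.2.2 ^ 2) / 2 + (p.1 ^ 2 - p.2.2.2 ^ 2) * p.2.1 * p.2.2.1 / 2
      + p.2.2.2 * p.1 ^ 2 * p.2.1 ^ 2 := by fun_prop
  have hlim := (hΦ.tendsto (0, 0, 0, β)).comp
    (hu.prodMk_nhds (hsin.prodMk_nhds (hcu.prodMk_nhds hb)))
  refine (by simpa using hlim : Tendsto _ l _).congr' ?_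
  filter_upwards [hω.eventually_ne_atTop 0] with k hk
  simp only [Function.comp_apply, u]
  rw [integral_sq_cos_add_sin _ _ _ hk]
  field_simp
  ring

lemma tendsto_sqrt_div_const_mul_sq {a w : α → ℝ} {c : ℝ} (hc : 0 < c)
    (h : Tendsto (fun k => a k / w k ^ 4) l (𝓝 (c ^ 2))) :
    Tendsto (fun k => √(a k) / (c * w k ^ 2)) l (𝓝 1) := by
  have hsqrt (k : α) : √(a k) / (c * w k ^ 2) = √(a k / w k ^ 4) / c := by
    rw [sqrt_div' _ (by positivity), show w k ^ 4 = (w k ^ 2) ^ 2 by ring,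
      sqrt_sq (by positivity), div_div, mul_comm]
  simpa [hsqrt, sqrt_sq hc.le, hc.ne'] using h.sqrt.div_const c

end

/-- The squared norms N_k of the eigenfunctions X_k in the
modified scalar product satisfy N_k/ω_k⁴ → μ0²/2, i.e. the normalization
constants g_k = √N_k satisfy g_k ~ (μ0/√2) ω_k². -/
theorem eigenfunction_norm_asymptotics
    (μ0 μ1 d0 d1 : ℝ) (hμ0 : 0 < μ0) (hμ1 : 0 < μ1)
    (G : ℝ → ℝ)
    (hG : ∀ x, G x = (x^2 - μ0*μ1*(x^2 - d0)*(x^2 - d1)) * Real.sin x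
        + (μ0*(x^2 - d0) + μ1*(x^2 - d1)) * x * Real.cos x)
    (ω : ℕ → ℝ) (K₀ : ℕ)
    (hω : ∀ k : ℕ, K₀ ≤ k →
      ω k ∈ Ioo ((k:ℝ)*π) (((k:ℝ)+1)*π) ∧ G (ω k) = 0 ∧
      ∀ ω' ∈ Ioo ((k:ℝ)*π) (((k:ℝ)+1)*π), G ω' = 0 → ω' = ω k)
    (X : ℕ → ℝ → ℝ)
    (hX : ∀ k x, X k x = ω k * Real.cos (ω k * x) + μ0*(d0 - (ω k)^2) * Real.sin (ω k * x))
    (N : ℕ → ℝ)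
    (hN : ∀ k, N k = μ0 * (X k 0)^2 + μ1 * (X k 1)^2 + ∫ x in (0:ℝ)..1, (X k x)^2) :
    Tendsto (fun k => N k / (ω k)^4) atTop (nhds (μ0^2/2)) ∧
    Tendsto (fun k => Real.sqrt (N k) / ((μ0/Real.sqrt 2) * (ω k)^2)) atTop (nhds 1) := by
  have hω_top : Tendsto ω atTop atTop := by
    refine tendsto_atTop_mono' _ ?_ (tendsto_natCast_atTop_atTop.atTop_mul_const pi_pos)
    filter_upwards [eventually_ge_atTop K₀] with k hk
    exact (hω k hk).1.1.le
  have hsin : Tendsto (fun k => sin (ω k)) atTop (𝓝 0) := by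
    refine tendsto_sin_of_characteristic_eq_zero (d0 := d0) (d1 := d1) hμ0.ne' hμ1.ne' hω_top ?_
    filter_upwards [eventually_ge_atTop K₀] with k hk
    simpa only [hG] using (hω k hk).2.1
  have hb : Tendsto (fun k => μ0 * (d0 - ω k ^ 2) / ω k ^ 2) atTop (𝓝 (-μ0)) := by
    have hu := ((hω_top.inv_tendsto_atTop.pow 2).const_mul (μ0 * d0)).sub_const μ0
    refine (by simpa using hu : Tendsto _ _ _).congr' ?_
    filter_upwards [hω_top.eventually_ne_atTop 0] with k hk
    field_simp
  have hN_eq : N = fun k => μ0 * ω k ^ 2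
      + μ1 * (ω k * cos (ω k) + μ0 * (d0 - ω k ^ 2) * sin (ω k)) ^ 2
      + ∫ x in (0:ℝ)..1,
          (ω k * cos (ω k * x) + μ0 * (d0 - ω k ^ 2) * sin (ω k * x)) ^ 2 := by
    ext k
    simp [hN, hX]
  have hlim : Tendsto (fun k => N k / ω k ^ 4) atTop (𝓝 (μ0 ^ 2 / 2)) := by
    simpa [hN_eq] using tendsto_boundary_add_integral_sq_div_pow_four hω_top hsin hb
  refine ⟨hlim, tendsto_sqrt_div_const_mul_sq (by positivity) ?_⟩
  rwa [div_pow, sq_sqrt zero_le_two]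
end

section
/- Fix μ0, μ1 > 0, real numbers d0, d1 and ω̃ > 0, and for each sufficiently large k ∈ ℕ let ω_k ∈ (kπ, (k+1)π) be the unique solution in that interval of the characteristic equation (ω² − μ0·μ1·(ω² − d0)·(ω² − d1))·sin ω + (μ0·(ω² − d0) + μ1·(ω² − d1))·ω·cos ω = 0, let X_k(x) := ω_k·cos(ω_k x) + μ0·(d0 − ω_k²)·sin(ω_k x), and let N_k := μ0·X_k(0)² + μ1·X_k(1)² + ∫₀¹ X_k(x)² dx. Then the series Σ_k √(ω̃² + ω_k²)·X_k(0)²/N_k = Σ_k √(ω̃² + ω_k²)·ω_k²/N_k diverges to +∞. (This divergence means that the function supported at the boundary point 0 does not belong to the one-particle Hilbert space 𝔥 with scalar product ⟨·,·⟩₊ weighted by √(ω̃² − Δ_μ), which is the key step showing that the Fock space of the string–point-mass system does not factorize as a tensor product of Hilbert spaces associated with the masses and the string.) -/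
/-!
Write `ω = ω_k`. Since `X_k(0) = ω` and, by Cauchy–Schwarz, `X_k(x)² ≤ ω² + μ0² (d0 - ω²)²`, we
get `N_k = O(ω⁴)`, so the `k`-th term is at least a constant times `ω³ / ω⁴ = 1 / ω`. As
`ω_k < (k + 1)π ≤ 2kπ`, this is at least a constant times `1 / k`, and the series diverges by
comparison with the harmonic series.
-/

open Real Set Filter

noncomputable section

/-- `X_k` with `ω_k` replaced by an arbitrary frequency `w`. -/
def eigenfun (μ0 d0 w x : ℝ) : ℝ :=
  w * cos (w * x) + μ0 * (d0 - w ^ 2) * sin (w * x)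

def eigenNormSq (μ0 μ1 d0 w : ℝ) : ℝ :=
  μ0 * eigenfun μ0 d0 w 0 ^ 2 + μ1 * eigenfun μ0 d0 w 1 ^ 2 +
    ∫ x in (0 : ℝ)..1, eigenfun μ0 d0 w x ^ 2

def eigenNormSqBound (μ0 μ1 d0 : ℝ) : ℝ :=
  μ0 + (μ1 + 1) * (1 + μ0 ^ 2 * (|d0| + 1) ^ 2)

end

theorem sq_mul_cos_add_mul_sin_le (a b t : ℝ) : (a * cos t + b * sin t) ^ 2 ≤ a ^ 2 + b ^ 2 := by
  nlinarith [sq_nonneg (a * sin t - b * cos t), sin_sq_add_cos_sq t]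

theorem tendsto_sum_range_atTop_of_eventually_const_div_le {f : ℕ → ℝ} (hf : ∀ k, 0 ≤ f k)
    {c : ℝ} (hc : 0 < c) (h : ∀ᶠ k : ℕ in atTop, c / k ≤ f k) :
    Tendsto (fun n => ∑ k ∈ Finset.range n, f k) atTop atTop := by
  rw [← not_summable_iff_tendsto_nat_atTop_of_nonneg hf]
  intro hsum
  have hharm : Summable fun k : ℕ => c * (1 / (k : ℝ)) := by
    refine Summable.of_norm_bounded_eventually_nat hsum (h.mono fun k hk => ?_)
    rw [norm_of_nonneg (by positivity), mul_one_div]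
    exact hk
  exact not_summable_one_div_natCast ((summable_mul_left_iff hc.ne').1 hharm)

section Eigenfunction

variable {μ0 μ1 d0 w : ℝ}

@[simp]
theorem eigenfun_zero : eigenfun μ0 d0 w 0 = w := by
  simp [eigenfun]

theorem eigenfun_sq_le (x : ℝ) : eigenfun μ0 d0 w x ^ 2 ≤ w ^ 2 + (μ0 * (d0 - w ^ 2)) ^ 2 :=
  sq_mul_cos_add_mul_sin_le _ _ _

theorem sq_add_sq_le_of_one_le (μ0 d0 : ℝ) (hw : 1 ≤ w) :
    w ^ 2 + (μ0 * (d0 - w ^ 2)) ^ 2 ≤ (1 + μ0 ^ 2 * (|d0| + 1) ^ 2) * w ^ 4 := by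
  have hw2 : 1 ≤ w ^ 2 := one_le_pow₀ hw
  have habs : |d0 - w ^ 2| ≤ (|d0| + 1) * w ^ 2 := by
    calc |d0 - w ^ 2| ≤ |d0| + w ^ 2 := (abs_sub d0 (w ^ 2)).trans_eq (by rw [abs_sq])
      _ ≤ (|d0| + 1) * w ^ 2 := by nlinarith [abs_nonneg d0]
  have hsq : (d0 - w ^ 2) ^ 2 ≤ (|d0| + 1) ^ 2 * w ^ 4 := by
    rw [← sq_abs]
    calc |d0 - w ^ 2| ^ 2 ≤ ((|d0| + 1) * w ^ 2) ^ 2 := by gcongr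
      _ = (|d0| + 1) ^ 2 * w ^ 4 := by ring
  rw [mul_pow]
  nlinarith [mul_le_mul_of_nonneg_left hsq (sq_nonneg μ0)]

theorem integral_eigenfun_sq_le :
    ∫ x in (0 : ℝ)..1, eigenfun μ0 d0 w x ^ 2 ≤ w ^ 2 + (μ0 * (d0 - w ^ 2)) ^ 2 := by
  have h := intervalIntegral.norm_integral_le_of_norm_le_const (a := 0) (b := 1)
    (f := fun x => eigenfun μ0 d0 w x ^ 2) fun x _ => by
      rw [norm_of_nonneg (sq_nonneg _)]
      exact eigenfun_sq_le x
  simpa using (le_abs_self _).trans h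

theorem integral_eigenfun_sq_nonneg : 0 ≤ ∫ x in (0 : ℝ)..1, eigenfun μ0 d0 w x ^ 2 :=
  intervalIntegral.integral_nonneg zero_le_one fun _ _ => sq_nonneg _

theorem eigenNormSq_nonneg (hμ0 : 0 ≤ μ0) (hμ1 : 0 ≤ μ1) : 0 ≤ eigenNormSq μ0 μ1 d0 w := by
  have := integral_eigenfun_sq_nonneg (μ0 := μ0) (d0 := d0) (w := w)
  rw [eigenNormSq]
  positivity

theorem eigenNormSq_pos (hμ0 : 0 < μ0) (hμ1 : 0 ≤ μ1) (hw : w ≠ 0) :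
    0 < eigenNormSq μ0 μ1 d0 w := by
  have := integral_eigenfun_sq_nonneg (μ0 := μ0) (d0 := d0) (w := w)
  rw [eigenNormSq, eigenfun_zero]
  positivity

theorem eigenNormSq_le (hμ0 : 0 ≤ μ0) (hμ1 : 0 ≤ μ1) (hw : 1 ≤ w) :
    eigenNormSq μ0 μ1 d0 w ≤ eigenNormSqBound μ0 μ1 d0 * w ^ 4 := by
  have hB := sq_add_sq_le_of_one_le μ0 d0 hw
  have hw24 : w ^ 2 ≤ w ^ 4 := pow_le_pow_right₀ hw (by norm_num)
  have h1 := mul_le_mul_of_nonneg_left (eigenfun_sq_le (μ0 := μ0) (d0 := d0) (w := w) 1) hμ1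
  rw [eigenNormSq, eigenfun_zero, eigenNormSqBound]
  nlinarith [integral_eigenfun_sq_le (μ0 := μ0) (d0 := d0) (w := w),
    mul_le_mul_of_nonneg_left hw24 hμ0]

theorem eigenNormSqBound_pos (hμ0 : 0 ≤ μ0) (hμ1 : 0 ≤ μ1) : 0 < eigenNormSqBound μ0 μ1 d0 := by
  unfold eigenNormSqBound
  positivity

theorem one_div_le_eigen_term (hμ0 : 0 < μ0) (hμ1 : 0 ≤ μ1) (ωt : ℝ) (hw : 1 ≤ w) :
    1 / (eigenNormSqBound μ0 μ1 d0 * w) ≤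
      √(ωt ^ 2 + w ^ 2) * eigenfun μ0 d0 w 0 ^ 2 / eigenNormSq μ0 μ1 d0 w := by
  have hw0 : 0 < w := by linarith
  have hC := eigenNormSqBound_pos (d0 := d0) hμ0.le hμ1
  have hN := eigenNormSq_pos (d0 := d0) hμ0 hμ1 hw0.ne'
  have hsqrt : w ≤ √(ωt ^ 2 + w ^ 2) := le_sqrt_of_sq_le (by nlinarith)
  rw [eigenfun_zero]
  calc 1 / (eigenNormSqBound μ0 μ1 d0 * w) = w ^ 3 / (eigenNormSqBound μ0 μ1 d0 * w ^ 4) := by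
        field_simp
    _ ≤ w ^ 3 / eigenNormSq μ0 μ1 d0 w := by
        gcongr
        exact eigenNormSq_le hμ0.le hμ1 hw
    _ = w * w ^ 2 / eigenNormSq μ0 μ1 d0 w := by ring
    _ ≤ √(ωt ^ 2 + w ^ 2) * w ^ 2 / eigenNormSq μ0 μ1 d0 w := by gcongr

end Eigenfunction

theorem boundary_function_not_in_one_particle_space_general
    (μ0 μ1 d0 ωt : ℝ) (hμ0 : 0 < μ0) (hμ1 : 0 < μ1)
    (G : ℝ → ℝ)
    (ω : ℕ → ℝ) (K₀ : ℕ)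
    (hω : ∀ k : ℕ, K₀ ≤ k →
      ω k ∈ Ioo ((k:ℝ)*π) (((k:ℝ)+1)*π) ∧ G (ω k) = 0 ∧
      ∀ ω' ∈ Ioo ((k:ℝ)*π) (((k:ℝ)+1)*π), G ω' = 0 → ω' = ω k)
    (X : ℕ → ℝ → ℝ)
    (hX : ∀ k x, X k x = ω k * Real.cos (ω k * x) + μ0*(d0 - (ω k)^2) * Real.sin (ω k * x))
    (N : ℕ → ℝ)
    (hN : ∀ k, N k = μ0 * (X k 0)^2 + μ1 * (X k 1)^2 + ∫ x in (0:ℝ)..1, (X k x)^2) :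
    Tendsto (fun n => ∑ k ∈ Finset.range n,
      Real.sqrt (ωt^2 + (ω k)^2) * (X k 0)^2 / N k) atTop atTop := by
  have hXk : ∀ k, X k = eigenfun μ0 d0 (ω k) := fun k => funext (hX k)
  have hNk : ∀ k, N k = eigenNormSq μ0 μ1 d0 (ω k) := fun k => by rw [hN, hXk]; rfl
  set C := eigenNormSqBound μ0 μ1 d0
  have hC : 0 < C := eigenNormSqBound_pos hμ0.le hμ1.le
  simp only [hXk, hNk]
  refine tendsto_sum_range_atTop_of_eventually_const_div_le (fun k => ?_)
    (c := 1 / (C * (2 * π))) (by positivity) ?_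
  · have := eigenNormSq_nonneg (d0 := d0) (w := ω k) hμ0.le hμ1.le
    positivity
  filter_upwards [eventually_ge_atTop (max K₀ 1)] with k hk
  obtain ⟨⟨hlo, hhi⟩, -⟩ := hω k (le_of_max_le_left hk)
  have hk1 : (1 : ℝ) ≤ k := by exact_mod_cast le_of_max_le_right hk
  have hw1 : 1 ≤ ω k := by nlinarith [pi_gt_three]
  calc 1 / (C * (2 * π)) / k = 1 / (C * (2 * k * π)) := by field_simp
    _ ≤ 1 / (C * ω k) := by gcongr; nlinarith [pi_pos]
    _ ≤ _ := one_div_le_eigen_term hμ0 hμ1.le ωt hw1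

/-- The series Σ_k √(ω̃² + ω_k²)·X_k(0)²/N_k = Σ_k √(ω̃² + ω_k²)·ω_k²/N_k
diverges to +∞, so the boundary-supported function does not belong to the
one-particle Hilbert space: the Fock space does not factorize. -/
theorem boundary_function_not_in_one_particle_space
    (μ0 μ1 d0 d1 ωt : ℝ) (hμ0 : 0 < μ0) (hμ1 : 0 < μ1) (hωt : 0 < ωt)
    (G : ℝ → ℝ)
    (hG : ∀ x, G x = (x^2 - μ0*μ1*(x^2 - d0)*(x^2 - d1)) * Real.sin x
        + (μ0*(x^2 - d0) + μ1*(x^2 - d1)) * x * Real.cos x)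
    (ω : ℕ → ℝ) (K₀ : ℕ)
    (hω : ∀ k : ℕ, K₀ ≤ k →
      ω k ∈ Ioo ((k:ℝ)*π) (((k:ℝ)+1)*π) ∧ G (ω k) = 0 ∧
      ∀ ω' ∈ Ioo ((k:ℝ)*π) (((k:ℝ)+1)*π), G ω' = 0 → ω' = ω k)
    (X : ℕ → ℝ → ℝ)
    (hX : ∀ k x, X k x = ω k * Real.cos (ω k * x) + μ0*(d0 - (ω k)^2) * Real.sin (ω k * x))
    (N : ℕ → ℝ)
    (hN : ∀ k, N k = μ0 * (X k 0)^2 + μ1 * (X k 1)^2 + ∫ x in (0:ℝ)..1, (X k x)^2) :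
    Tendsto (fun n => ∑ k ∈ Finset.range n,
      Real.sqrt (ωt^2 + (ω k)^2) * (X k 0)^2 / N k) atTop atTop :=
  boundary_function_not_in_one_particle_space_general μ0 μ1 d0 ωt hμ0 hμ1 G ω K₀ hω X hX N hN
end
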